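/- arXiv:1105.3220 — 8 statements merged into one kernel-verified Lean document; each statement's English description precedes it below -/
import Mathlib

section
/- The dual of an arithmetic matroid is an arithmetic matroid. That is, if (M, m) is an arithmetic matroid on a list X with rank function rk, then (M*, m*) with m*(A) := m(X\A) and dual rank rk*(A) = |A| - rk(X) + rk(X\A) satisfies all five axioms of a multiplicity function. -/
open Finset

variable {α : Type*} [Fintype α] [DecidableEq α]

/-- The rank axioms of a matroid on the ground list `α` (the full list is `univ`). -/
def RankAxioms (rk : Finset α → ℕ) : Prop :=
  (∀ A : Finset α, rk A ≤ A.card) ∧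
  (∀ A B : Finset α, A ⊆ B → rk A ≤ rk B) ∧
  (∀ A B : Finset α, rk (A ∪ B) + rk (A ∩ B) ≤ rk A + rk B)

/-- The dual rank function `rk*(A) = |A| - rk(X) + rk(X \ A)`. -/
def dualRk (rk : Finset α → ℕ) (A : Finset α) : ℕ :=
  A.card + rk Aᶜ - rk Finset.univ

/-- The five axioms of a multiplicity function `m` on a matroid with rank function `rk`. -/
def MultAxioms (rk : Finset α → ℕ) (m : Finset α → ℕ) : Prop :=
  -- (1) if v is dependent on A then m(A ∪ {v}) divides m(A)
  (∀ (A : Finset α) (v : α), rk (insert v A) = rk A → m (insert v A) ∣ m A) ∧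
  -- (2) if v is independent on A then m(A) divides m(A ∪ {v})
  (∀ (A : Finset α) (v : α), rk (insert v A) = rk A + 1 → m A ∣ m (insert v A)) ∧
  -- (3) the molecular product axiom
  (∀ A F T : Finset α, Disjoint A F → Disjoint A T → Disjoint F T →
    (∀ C : Finset α, A ⊆ C → C ⊆ A ∪ F ∪ T → rk C = rk A + (C ∩ F).card) →
    m A * m (A ∪ F ∪ T) = m (A ∪ F) * m (A ∪ T)) ∧
  -- (4) positivity of μ_B(A) when rk(A) = rk(B)
  (∀ A B : Finset α, A ⊆ B → rk A = rk B →
    0 ≤ ∑ T ∈ Finset.Icc A B, (-1 : ℤ) ^ (T.card - A.card) * m T) ∧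
  -- (5) positivity of μ*_B(A) when rk*(A) = rk*(B)
  (∀ A B : Finset α, A ⊆ B → dualRk rk A = dualRk rk B →
    0 ≤ ∑ T ∈ Finset.Icc A B, (-1 : ℤ) ^ (T.card - A.card) * m Tᶜ)

/-- The dual of an arithmetic matroid is an arithmetic matroid: the dual
multiplicity function `m*(A) = m(X \ A)` satisfies all five axioms with respect
to the dual rank function. -/
theorem dual_arithmetic_matroid (rk : Finset α → ℕ) (m : Finset α → ℕ)
    (hm : ∀ A : Finset α, 0 < m A)
    (hrk : RankAxioms rk) (hax : MultAxioms rk m) :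
    MultAxioms (dualRk rk) (fun A => m Aᶜ) := by
  obtain ⟨hcard, hmono, hsub⟩ := hrk
  -- key inequality : rk univ ≤ |S| + rk Sᶜ
  have hkey : ∀ S : Finset α, rk Finset.univ ≤ S.card + rk Sᶜ := by
    intro S
    have h1 := hsub S Sᶜ
    have h2 := hcard S
    rw [Finset.union_compl, Finset.inter_compl] at h1
    omega
  have hins : ∀ (S : Finset α) (v : α),
      rk S ≤ rk (insert v S) ∧ rk (insert v S) ≤ rk S + 1 := by
    intro S v
    have h1 := hsub S {v}
    have h2 := hcard ({v} : Finset α)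
    have h3 := hmono S (insert v S) (Finset.subset_insert v S)
    rw [Finset.union_comm, ← Finset.insert_eq] at h1
    simp only [Finset.card_singleton] at h2
    omega
  refine ⟨?_, ?_, ?_, ?_, ?_⟩
  · -- axiom (1)
    intro A v h
    by_cases hv : v ∈ A
    · rw [Finset.insert_eq_self.mpr hv]
    · have hc : (insert v A)ᶜ = Aᶜ.erase v := Finset.compl_insert
      have hie : insert v (Aᶜ.erase v) = Aᶜ :=
        Finset.insert_erase (Finset.mem_compl.mpr hv)
      have h4 := hins (Aᶜ.erase v) v
      rw [hie] at h4
      have hcardins : (insert v A).card = A.card + 1 := Finset.card_insert_of_notMem hv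
      simp only [dualRk, hc, hcardins] at h
      have hk1 := hkey A
      have hk2 := hkey (insert v A)
      rw [hc, hcardins] at hk2
      have hr : rk (insert v (Aᶜ.erase v)) = rk (Aᶜ.erase v) + 1 := by rw [hie]; omega
      have := hax.2.1 (Aᶜ.erase v) v hr
      rw [hie] at this
      simpa [hc] using this
  · -- axiom (2)
    intro A v h
    by_cases hv : v ∈ A
    · rw [Finset.insert_eq_self.mpr hv] at h; omega
    · have hc : (insert v A)ᶜ = Aᶜ.erase v := Finset.compl_insert
      have hie : insert v (Aᶜ.erase v) = Aᶜ :=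
        Finset.insert_erase (Finset.mem_compl.mpr hv)
      have h4 := hins (Aᶜ.erase v) v
      rw [hie] at h4
      have hcardins : (insert v A).card = A.card + 1 := Finset.card_insert_of_notMem hv
      simp only [dualRk, hc, hcardins] at h
      have hk1 := hkey A
      have hk2 := hkey (insert v A)
      rw [hc, hcardins] at hk2
      have hr : rk (insert v (Aᶜ.erase v)) = rk (Aᶜ.erase v) := by rw [hie]; omega
      have := hax.1 (Aᶜ.erase v) v hr
      rw [hie] at this
      simpa [hc] using this
  · -- axiom (3)
    intro A F T hAF hAT hFT hcond
    set B : Finset α := A ∪ F ∪ T with hB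
    have hFB : F ⊆ B := Finset.Subset.trans Finset.subset_union_right Finset.subset_union_left
    have hTB : T ⊆ B := Finset.subset_union_right
    have hABs : A ⊆ B := Finset.Subset.trans Finset.subset_union_left Finset.subset_union_left
    have e1 : Bᶜ ∪ T ∪ F = Aᶜ := by
      ext x
      have h1 : x ∈ F → x ∉ A := fun hx => Finset.disjoint_right.mp hAF hx
      have h2 : x ∈ T → x ∉ A := fun hx => Finset.disjoint_right.mp hAT hx
      have h3 : x ∈ T → x ∉ F := fun hx => Finset.disjoint_right.mp hFT hx
      simp only [hB, Finset.mem_union, Finset.mem_compl]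
      tauto
    have e2 : Bᶜ ∪ T = (A ∪ F)ᶜ := by
      ext x
      have h1 : x ∈ T → x ∉ A := fun hx => Finset.disjoint_right.mp hAT hx
      have h2 : x ∈ T → x ∉ F := fun hx => Finset.disjoint_right.mp hFT hx
      simp only [hB, Finset.mem_union, Finset.mem_compl]
      tauto
    have e3 : Bᶜ ∪ F = (A ∪ T)ᶜ := by
      ext x
      have h1 : x ∈ F → x ∉ A := fun hx => Finset.disjoint_right.mp hAF hx
      have h2 : x ∈ F → x ∉ T := fun hx => Finset.disjoint_left.mp hFT hx
      simp only [hB, Finset.mem_union, Finset.mem_compl]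
      tauto
    have hd1 : Disjoint Bᶜ T := disjoint_compl_left.mono_right hTB
    have hd2 : Disjoint Bᶜ F := disjoint_compl_left.mono_right hFB
    have hcardB : B.card = A.card + (F.card + T.card) := by
      rw [hB, Finset.union_assoc,
        Finset.card_union_of_disjoint (Finset.disjoint_union_right.mpr ⟨hAF, hAT⟩),
        Finset.card_union_of_disjoint hFT]
    have hBF : B ∩ F = F := Finset.inter_eq_right.mpr hFB
    have hcondB := hcond B hABs (Finset.Subset.refl B)
    rw [hBF] at hcondB
    simp only [dualRk] at hcondB
    have hkA := hkey A
    have hkB := hkey B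
    have hcstar : ∀ C' : Finset α, Bᶜ ⊆ C' → C' ⊆ Bᶜ ∪ T ∪ F →
        rk C' = rk Bᶜ + (C' ∩ T).card := by
      intro C' h1 h2
      rw [e1] at h2
      have hAC : A ⊆ C'ᶜ := Finset.subset_compl_comm.mp h2
      have hCB : C'ᶜ ⊆ B := by simpa using Finset.compl_subset_compl.mpr h1
      have hC := hcond C'ᶜ hAC hCB
      simp only [dualRk, compl_compl] at hC
      have hCeq : C'ᶜ = A ∪ (C'ᶜ ∩ F ∪ C'ᶜ ∩ T) := by
        ext x
        have hx1 : x ∈ C'ᶜ → x ∈ A ∪ F ∪ T := fun h => hCB h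
        have hx2 : x ∈ A → x ∈ C'ᶜ := fun h => hAC h
        simp only [Finset.mem_union, Finset.mem_inter] at *
        tauto
      have hdu : Disjoint A (C'ᶜ ∩ F ∪ C'ᶜ ∩ T) := Finset.disjoint_union_right.mpr
        ⟨hAF.mono_right Finset.inter_subset_right, hAT.mono_right Finset.inter_subset_right⟩
      have hdu2 : Disjoint (C'ᶜ ∩ F) (C'ᶜ ∩ T) :=
        hFT.mono Finset.inter_subset_right Finset.inter_subset_right
      have hcardC : C'ᶜ.card = A.card + ((C'ᶜ ∩ F).card + (C'ᶜ ∩ T).card) := by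
        conv_lhs => rw [hCeq]
        rw [Finset.card_union_of_disjoint hdu, Finset.card_union_of_disjoint hdu2]
      have hpart : (C' ∩ T).card + (C'ᶜ ∩ T).card = T.card := by
        rw [Finset.inter_comm C' T, Finset.inter_comm C'ᶜ T,
          ← Finset.card_union_of_disjoint
            (disjoint_compl_right.mono Finset.inter_subset_right Finset.inter_subset_right),
          ← Finset.inter_union_distrib_left, Finset.union_compl, Finset.inter_univ]
      have hkC := hkey C'ᶜ
      rw [compl_compl] at hkC
      omega
    have hmol := hax.2.2.1 Bᶜ T F hd1 hd2 hFT.symm hcstar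
    rw [e1, e2, e3] at hmol
    show m Aᶜ * m Bᶜ = m (A ∪ F)ᶜ * m (A ∪ T)ᶜ
    rw [mul_comm]
    exact hmol
  · -- axiom (4)
    intro A B hAB h
    exact hax.2.2.2.2 A B hAB h
  · -- axiom (5)
    intro A B hAB h
    have hempty : rk (∅ : Finset α) = 0 := Nat.le_zero.mp (by simpa using hcard ∅)
    have hAc := hkey A
    have hBc := hkey B
    have hAc' := hkey Aᶜ
    have hBc' := hkey Bᶜ
    have hcA : Aᶜ.card = Fintype.card α - A.card := Finset.card_compl A
    have hcB : Bᶜ.card = Fintype.card α - B.card := Finset.card_compl B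
    rw [compl_compl, hcA] at hAc'
    rw [compl_compl, hcB] at hBc'
    have hcu : rk Finset.univ ≤ Fintype.card α := by
      simpa [Finset.card_univ] using hcard Finset.univ
    have hAle := Finset.card_le_univ A
    have hBle := Finset.card_le_univ B
    simp only [dualRk, compl_compl, Finset.compl_univ, hempty, Finset.card_univ,
      hcA, hcB] at h
    have hr : rk A = rk B := by omega
    have := hax.2.2.2.1 A B hAB hr
    simpa [compl_compl] using this
end

section
/- Axiom (3) of a multiplicity function is self-dual: if A ⊆ B ⊆ X with B = A ∪ F ∪ T a disjoint union such that rk*(C) = rk*(A) + |C ∩ F| for all A ⊆ C ⊆ B, then X\A = (X\B) ∪ T ∪ F is a disjoint union such that rk(X\C) = rk(X\B) + |(X\C) ∩ T| for all A ⊆ C ⊆ B; consequently if m satisfies axiom (3) then m*(A)·m*(B) = m*(A∪F)·m*(A∪T), where m*(S) = m(X\S). -/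
open Finset

variable {α : Type*} [Fintype α] [DecidableEq α]

/-- Axiom (3) of a multiplicity function is self-dual: if `B = A ∪ F ∪ T`
(disjointly) and `rk*(C) = rk*(A) + |C ∩ F|` for all `A ⊆ C ⊆ B`, then
`X\A = (X\B) ∪ T ∪ F` satisfies the hypotheses of axiom (3) for `rk`, namely
`rk(X\C) = rk(X\B) + |(X\C) ∩ T|` for all `A ⊆ C ⊆ B`; consequently, if `m`
satisfies axiom (3), then `m*(A)·m*(B) = m*(A∪F)·m*(A∪T)` where `m*(S) = m(X\S)`. -/
theorem axiom_three_self_dual (rk : Finset α → ℕ) (m : Finset α → ℕ)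
    (h1 : ∀ A : Finset α, rk A ≤ A.card)
    (h2 : ∀ A B : Finset α, A ⊆ B → rk A ≤ rk B)
    (h3 : ∀ A B : Finset α, rk (A ∪ B) + rk (A ∩ B) ≤ rk A + rk B)
    (hax3 : ∀ A F T : Finset α, Disjoint A F → Disjoint A T → Disjoint F T →
      (∀ C : Finset α, A ⊆ C → C ⊆ A ∪ F ∪ T → rk C = rk A + (C ∩ F).card) →
      m A * m (A ∪ F ∪ T) = m (A ∪ F) * m (A ∪ T))
    (A F T : Finset α) (hAF : Disjoint A F) (hAT : Disjoint A T)
    (hFT : Disjoint F T)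
    (hdual : ∀ C : Finset α, A ⊆ C → C ⊆ A ∪ F ∪ T →
      dualRk rk C = dualRk rk A + (C ∩ F).card) :
    (∀ C : Finset α, A ⊆ C → C ⊆ A ∪ F ∪ T →
      rk Cᶜ = rk (A ∪ F ∪ T)ᶜ + (Cᶜ ∩ T).card) ∧
    m Aᶜ * m (A ∪ F ∪ T)ᶜ = m (A ∪ F)ᶜ * m (A ∪ T)ᶜ := by
  classical
  -- membership versions of disjointness
  have dAF : ∀ x, x ∈ A → x ∉ F := fun x hx => Finset.disjoint_left.mp hAF hx
  have dAT : ∀ x, x ∈ A → x ∉ T := fun x hx => Finset.disjoint_left.mp hAT hx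
  have dFT : ∀ x, x ∈ F → x ∉ T := fun x hx => Finset.disjoint_left.mp hFT hx
  have key : ∀ C : Finset α, rk Finset.univ ≤ C.card + rk Cᶜ := by
    intro C
    have h := h3 C Cᶜ
    rw [Finset.union_compl] at h
    have h' := h1 C
    omega
  have cardsplit : ∀ C : Finset α, A ⊆ C → C ⊆ A ∪ F ∪ T →
      C.card = A.card + (C ∩ F).card + (C ∩ T).card := by
    intro C hAC hCB
    have hC : C = (A ∪ (C ∩ F)) ∪ (C ∩ T) := by
      ext x
      simp only [Finset.mem_union, Finset.mem_inter]
      constructor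
      · intro hx
        have hb := hCB hx
        simp only [Finset.mem_union] at hb
        tauto
      · rintro ((h | h) | h)
        · exact hAC h
        · exact h.1
        · exact h.1
    have d1 : Disjoint A (C ∩ F) := hAF.mono_right (Finset.inter_subset_right)
    have d2 : Disjoint (A ∪ (C ∩ F)) (C ∩ T) := by
      apply Finset.disjoint_union_left.mpr
      exact ⟨hAT.mono_right Finset.inter_subset_right,
        (hFT.mono_right Finset.inter_subset_right).mono_left Finset.inter_subset_right⟩
    calc C.card = ((A ∪ (C ∩ F)) ∪ (C ∩ T)).card := by rw [← hC]
      _ = A.card + (C ∩ F).card + (C ∩ T).card := by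
          rw [Finset.card_union_of_disjoint d2, Finset.card_union_of_disjoint d1]
  have main : ∀ C : Finset α, A ⊆ C → C ⊆ A ∪ F ∪ T →
      rk Cᶜ + (C ∩ T).card = rk Aᶜ := by
    intro C hAC hCB
    have hd := hdual C hAC hCB
    unfold dualRk at hd
    have k1 := key C
    have k2 := key A
    have hcs := cardsplit C hAC hCB
    omega
  have hAB : A ⊆ A ∪ F ∪ T := (Finset.subset_union_left).trans Finset.subset_union_left
  have hBB : (A ∪ F ∪ T) ⊆ A ∪ F ∪ T := le_refl _
  have hT : ((A ∪ F ∪ T) ∩ T) = T := Finset.inter_eq_right.mpr Finset.subset_union_right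
  have hBmain := main (A ∪ F ∪ T) hAB hBB
  rw [hT] at hBmain
  have part1 : ∀ C : Finset α, A ⊆ C → C ⊆ A ∪ F ∪ T →
      rk Cᶜ = rk (A ∪ F ∪ T)ᶜ + (Cᶜ ∩ T).card := by
    intro C hAC hCB
    have hm := main C hAC hCB
    have hcompl : Cᶜ ∩ T = T \ C := by
      ext x; simp [Finset.mem_sdiff, and_comm]
    have hcard : (T \ C).card + (T ∩ C).card = T.card :=
      Finset.card_sdiff_add_card_inter T C
    have hTC : (T ∩ C) = C ∩ T := Finset.inter_comm T C
    rw [hcompl]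
    rw [hTC] at hcard
    omega
  refine ⟨part1, ?_⟩
  -- set identities
  have id1 : (A ∪ F ∪ T)ᶜ ∪ T ∪ F = Aᶜ := by
    ext x
    simp only [Finset.mem_union, Finset.mem_compl]
    have := dAF x; have := dAT x
    tauto
  have id2 : (A ∪ F ∪ T)ᶜ ∪ T = (A ∪ F)ᶜ := by
    ext x
    simp only [Finset.mem_union, Finset.mem_compl]
    have := dAT x; have := dFT x
    tauto
  have id3 : (A ∪ F ∪ T)ᶜ ∪ F = (A ∪ T)ᶜ := by
    ext x
    simp only [Finset.mem_union, Finset.mem_compl]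
    have := dAF x; have := dFT x
    tauto
  have dBT : Disjoint (A ∪ F ∪ T)ᶜ T := by
    rw [Finset.disjoint_left]
    intro x hx hxT
    simp only [Finset.mem_compl, Finset.mem_union] at hx
    tauto
  have dBF : Disjoint (A ∪ F ∪ T)ᶜ F := by
    rw [Finset.disjoint_left]
    intro x hx hxF
    simp only [Finset.mem_compl, Finset.mem_union] at hx
    tauto
  have hax := hax3 (A ∪ F ∪ T)ᶜ T F dBT dBF hFT.symm ?_
  · rw [id1, id2, id3] at hax
    linarith [hax]
  · intro C' hBC' hC'A
    rw [id1] at hC'A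
    have hAC : A ⊆ C'ᶜ := by
      intro x hx
      simp only [Finset.mem_compl]
      intro hxC'
      exact (Finset.mem_compl.mp (hC'A hxC')) hx
    have hCB : C'ᶜ ⊆ A ∪ F ∪ T := by
      intro x hx
      simp only [Finset.mem_compl] at hx
      by_contra hxB
      exact hx (hBC' (Finset.mem_compl.mpr hxB))
    have := part1 C'ᶜ hAC hCB
    rwa [compl_compl] at this
end

section
/- Let G be a finitely generated abelian group and X a finite list of elements of G, with multiplicity m(A) := |G_A : ⟨A⟩| where G_A is the maximal subgroup of G containing ⟨A⟩ with finite index. If A ⊆ B ⊆ X, B = A ∪ T ∪ F disjoint, and rk(C) = rk(A) + |C ∩ F| for all A ⊆ C ⊆ B (where rk(S) is the free rank of ⟨S⟩), then m(A)·m(B) = m(A∪T)·m(A∪F). -/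
open Finset

/-- The free rank of the subgroup generated by a set `s` in an abelian group. -/
noncomputable def grk {G : Type*} [AddCommGroup G] (s : Set G) : ℕ :=
  Module.finrank ℤ (AddSubgroup.closure s)

/-- The saturation of a subgroup `H` of an abelian group `G`: the maximal
subgroup of `G` in which `H` has finite index (the preimage of the torsion
subgroup of `G ⧸ H`). -/
def satur {G : Type*} [AddCommGroup G] (H : AddSubgroup G) : AddSubgroup G :=
  (AddCommGroup.torsion (G ⧸ H)).comap (QuotientAddGroup.mk' H)

/-- The multiplicity of a subgroup: its index in its saturation. -/
noncomputable def gmult {G : Type*} [AddCommGroup G] (H : AddSubgroup G) : ℕ :=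
  H.relIndex (satur H)

section AuxGroup

open QuotientAddGroup

variable {G : Type*} [AddCommGroup G]

lemma mem_satur' {H : AddSubgroup G} {x : G} :
    x ∈ satur H ↔ ∃ n : ℤ, n ≠ 0 ∧ n • x ∈ H := by
  simp only [satur, AddSubgroup.mem_comap, AddCommGroup.mem_torsion,
    isOfFinAddOrder_iff_zsmul_eq_zero]
  constructor
  · rintro ⟨n, hn, h⟩
    refine ⟨n, hn, ?_⟩
    rwa [← map_zsmul (mk' H) n x, mk'_apply, QuotientAddGroup.eq_zero_iff] at h
  · rintro ⟨n, hn, h⟩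
    refine ⟨n, hn, ?_⟩
    rw [← map_zsmul (mk' H) n x, mk'_apply, QuotientAddGroup.eq_zero_iff]
    exact h

lemma mem_torsion_map' {α β : Type*} [AddCommGroup α] [AddCommGroup β] (f : α →+ β) {x : α}
    (hx : x ∈ AddCommGroup.torsion α) : f x ∈ AddCommGroup.torsion β := by
  rw [AddCommGroup.mem_torsion, isOfFinAddOrder_iff_zsmul_eq_zero] at hx ⊢
  obtain ⟨n, hn, h⟩ := hx
  exact ⟨n, hn, by rw [← map_zsmul, h, map_zero]⟩

lemma card_torsion_congr' {α β : Type*} [AddCommGroup α] [AddCommGroup β] (e : α ≃+ β) :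
    Nat.card (AddCommGroup.torsion α) = Nat.card (AddCommGroup.torsion β) := by
  refine Nat.card_congr ⟨fun x => ⟨e x.1, mem_torsion_map' e.toAddMonoidHom x.2⟩,
    fun y => ⟨e.symm y.1, mem_torsion_map' e.symm.toAddMonoidHom y.2⟩, fun x => ?_, fun y => ?_⟩
  · ext; simp
  · ext; simp

lemma gmult_eq_card_torsion (H : AddSubgroup G) :
    gmult H = Nat.card (AddCommGroup.torsion (G ⧸ H)) := by
  have h1 : gmult H = Nat.card ((satur H) ⧸ H.addSubgroupOf (satur H)) := rfl
  rw [h1]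
  let f : satur H →+ AddCommGroup.torsion (G ⧸ H) :=
    ((mk' H).comp (satur H).subtype).codRestrict _ (fun x => x.2)
  have hsurj : Function.Surjective f := by
    rintro ⟨y, hy⟩
    obtain ⟨x, rfl⟩ := mk'_surjective H y
    exact ⟨⟨x, hy⟩, rfl⟩
  have hker : f.ker = H.addSubgroupOf (satur H) := by
    ext x
    simp only [f, AddMonoidHom.mem_ker, AddSubgroup.mem_addSubgroupOf]
    rw [Subtype.ext_iff]
    simp only [AddMonoidHom.codRestrict_apply, AddMonoidHom.comp_apply,
      AddSubgroup.coe_subtype, mk'_apply, ZeroMemClass.coe_zero]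
    exact QuotientAddGroup.eq_zero_iff _
  rw [← hker]
  exact Nat.card_congr (quotientKerEquivOfSurjective f hsurj).toEquiv

lemma card_torsion_eq_mul (K : AddSubgroup G) (hK : K ≤ AddCommGroup.torsion G) :
    Nat.card (AddCommGroup.torsion G) =
      Nat.card K * Nat.card (AddCommGroup.torsion (G ⧸ K)) := by
  let f : AddCommGroup.torsion G →+ AddCommGroup.torsion (G ⧸ K) :=
    ((mk' K).comp (AddCommGroup.torsion G).subtype).codRestrict _
      (fun x => mem_torsion_map' (mk' K) x.2)
  have hsurj : Function.Surjective f := by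
    rintro ⟨y, hy⟩
    obtain ⟨x, rfl⟩ := mk'_surjective K y
    have hx : x ∈ AddCommGroup.torsion G := by
      rw [AddCommGroup.mem_torsion, isOfFinAddOrder_iff_zsmul_eq_zero] at hy ⊢
      obtain ⟨n, hn, h⟩ := hy
      rw [← map_zsmul (mk' K) n x, mk'_apply, QuotientAddGroup.eq_zero_iff] at h
      have h2 := hK h
      rw [AddCommGroup.mem_torsion, isOfFinAddOrder_iff_zsmul_eq_zero] at h2
      obtain ⟨m, hm, h3⟩ := h2
      exact ⟨m * n, mul_ne_zero hm hn, by rwa [mul_smul]⟩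
    exact ⟨⟨x, hx⟩, rfl⟩
  have hker : f.ker = K.addSubgroupOf (AddCommGroup.torsion G) := by
    ext x
    simp only [f, AddMonoidHom.mem_ker, AddSubgroup.mem_addSubgroupOf]
    rw [Subtype.ext_iff]
    simp only [AddMonoidHom.codRestrict_apply, AddMonoidHom.comp_apply,
      AddSubgroup.coe_subtype, mk'_apply, ZeroMemClass.coe_zero]
    exact QuotientAddGroup.eq_zero_iff _
  calc Nat.card (AddCommGroup.torsion G)
      = Nat.card (AddCommGroup.torsion G ⧸ f.ker) * Nat.card f.ker :=
        AddSubgroup.card_eq_card_quotient_mul_card_addSubgroup f.ker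
    _ = Nat.card (AddCommGroup.torsion (G ⧸ K)) * Nat.card K := by
        rw [Nat.card_congr (quotientKerEquivOfSurjective f hsurj).toEquiv]
        congr 1
        rw [hker]
        exact Nat.card_congr (AddSubgroup.addSubgroupOfEquivOfLe hK).toEquiv
    _ = Nat.card K * Nat.card (AddCommGroup.torsion (G ⧸ K)) := mul_comm _ _

lemma card_map_mk' (H K : AddSubgroup G) :
    Nat.card (K.map (mk' H)) = Nat.card (K ⧸ H.addSubgroupOf K) := by
  let f : K →+ G ⧸ H := (mk' H).comp K.subtype
  have hrange : f.range = K.map (mk' H) := by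
    ext y
    simp only [f, AddMonoidHom.mem_range, AddMonoidHom.comp_apply, AddSubgroup.coe_subtype,
      AddSubgroup.mem_map]
    exact ⟨fun ⟨x, hx⟩ => ⟨x.1, x.2, hx⟩, fun ⟨g, hg, h⟩ => ⟨⟨g, hg⟩, h⟩⟩
  have hker : f.ker = H.addSubgroupOf K := by
    ext x
    simp only [f, AddMonoidHom.mem_ker, AddMonoidHom.comp_apply, AddSubgroup.coe_subtype,
      mk'_apply, AddSubgroup.mem_addSubgroupOf]
    exact QuotientAddGroup.eq_zero_iff _
  rw [← hrange, ← hker]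
  exact (Nat.card_congr (quotientKerEquivRange f).toEquiv).symm

lemma main_step (H K : AddSubgroup G) (hK : K ≤ satur H) :
    Nat.card (AddCommGroup.torsion (G ⧸ H)) =
      Nat.card (K.map (mk' H)) * Nat.card (AddCommGroup.torsion (G ⧸ (H ⊔ K))) := by
  have h1 : K.map (mk' H) ≤ AddCommGroup.torsion (G ⧸ H) :=
    (AddSubgroup.map_le_iff_le_comap (f := mk' H)).mpr hK
  have e : ((G ⧸ H) ⧸ (K.map (mk' H))) ≃+ G ⧸ (H ⊔ K) := by
    have h2 : (H ⊔ K).map (mk' H) = K.map (mk' H) := by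
      rw [AddSubgroup.map_sup, QuotientAddGroup.map_mk'_self, bot_sup_eq]
    rw [← h2]
    exact QuotientAddGroup.quotientQuotientEquivQuotient H (H ⊔ K) le_sup_left
  rw [card_torsion_eq_mul (K.map (mk' H)) h1, card_torsion_congr' e]

end AuxGroup

section AuxRank

open Submodule Module

lemma mem_closure_iff_span {G : Type*} [AddCommGroup G] {s : Set G} {z : G} :
    z ∈ AddSubgroup.closure s ↔ z ∈ span ℤ s := by
  rw [← Submodule.span_int_eq_addSubgroupClosure, Submodule.mem_toAddSubgroup]

lemma grk_eq_finrank_span {G : Type*} [AddCommGroup G] (s : Set G) :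
    grk s = finrank ℤ ↥(span ℤ s) := by
  let e : ↥(AddSubgroup.closure s) ≃+ ↥(span ℤ s) :=
    { toFun := fun x => ⟨x.1, mem_closure_iff_span.mp x.2⟩
      invFun := fun x => ⟨x.1, mem_closure_iff_span.mpr x.2⟩
      left_inv := fun x => rfl
      right_inv := fun x => rfl
      map_add' := fun x y => rfl }
  exact e.toIntLinearEquiv.finrank_eq

variable {G : Type*} [AddCommGroup G] [AddGroup.FG G]

instance (priority := 50) fgIntFinite : Module.Finite ℤ G := Module.Finite.iff_addGroup_fg.mpr ‹_›

lemma finrank_sup_add_finrank_inf (s t : Submodule ℤ G) :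
    finrank ℤ ↥(s ⊔ t) + finrank ℤ ↥(s ⊓ t) = finrank ℤ ↥s + finrank ℤ ↥t := by
  have h := Submodule.rank_sup_add_rank_inf_eq s t
  have : ((finrank ℤ ↥(s ⊔ t) + finrank ℤ ↥(s ⊓ t) : ℕ) : Cardinal)
      = ((finrank ℤ ↥s + finrank ℤ ↥t : ℕ) : Cardinal) := by
    rw [Nat.cast_add, Nat.cast_add, finrank_eq_rank ℤ, finrank_eq_rank ℤ, finrank_eq_rank ℤ,
      finrank_eq_rank ℤ]
    exact h
  exact_mod_cast this

lemma rank_sup_span_singleton_eq (H : Submodule ℤ G) (x : G) {n : ℤ} (hn : n ≠ 0)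
    (hx : n • x ∈ H) : finrank ℤ ↥(H ⊔ span ℤ {x}) = finrank ℤ ↥H := by
  set t := span ℤ ({x} : Set G) with ht
  have hmapsto : ∀ y : ↥t, n • (y : G) ∈ H ⊓ t := by
    rintro ⟨y, hy⟩
    obtain ⟨m, rfl⟩ := mem_span_singleton.mp hy
    exact ⟨by rw [smul_comm]; exact H.smul_mem m hx,
      t.smul_mem n (mem_span_singleton.mpr ⟨m, rfl⟩)⟩
  let g : ↥t →ₗ[ℤ] G := n • t.subtype
  let f : ↥t →ₗ[ℤ] ↥(H ⊓ t) := LinearMap.codRestrict (H ⊓ t) g (fun y => hmapsto y)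
  have hker : finrank ℤ ↥(LinearMap.ker f) = 0 := by
    rw [Module.finrank_eq_zero_iff]
    intro z
    refine ⟨n, hn, ?_⟩
    have hz : n • ((z : ↥t) : G) = 0 := by
      have h1 : f z.1 = 0 := z.2
      exact congrArg Subtype.val h1
    exact Subtype.ext (Subtype.ext hz)
  have hq := Submodule.finrank_quotient_add_finrank (LinearMap.ker f)
  have hre : finrank ℤ (↥t ⧸ LinearMap.ker f) = finrank ℤ ↥(LinearMap.range f) :=
    f.quotKerEquivRange.finrank_eq
  have hle : finrank ℤ ↥t ≤ finrank ℤ ↥(H ⊓ t) := by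
    have := Submodule.finrank_le (LinearMap.range f)
    omega
  have hge : finrank ℤ ↥(H ⊓ t) ≤ finrank ℤ ↥t := Submodule.finrank_mono inf_le_right
  have hsupinf := finrank_sup_add_finrank_inf H t
  omega

lemma exists_zsmul_mem_of_rank_eq (H : Submodule ℤ G) (x : G)
    (h : finrank ℤ ↥(H ⊔ span ℤ {x}) = finrank ℤ ↥H) : ∃ n : ℤ, n ≠ 0 ∧ n • x ∈ H := by
  set t := span ℤ ({x} : Set G) with ht
  have hsupinf := finrank_sup_add_finrank_inf H t
  have hHle : finrank ℤ ↥H ≤ finrank ℤ ↥(H ⊔ t) := Submodule.finrank_mono le_sup_left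
  have h2 : finrank ℤ ↥(H ⊓ t) = finrank ℤ ↥t := by omega
  rcases eq_or_ne (finrank ℤ ↥t) 0 with h0 | h0
  · obtain ⟨a, ha, ha2⟩ := Module.finrank_eq_zero_iff.mp h0 ⟨x, mem_span_singleton_self x⟩
    refine ⟨a, ha, ?_⟩
    have : a • x = 0 := congrArg Subtype.val ha2
    rw [this]; exact H.zero_mem
  · have hnt : Nontrivial ↥(H ⊓ t) := by
      by_contra hc
      rw [not_nontrivial_iff_subsingleton] at hc
      rw [Module.finrank_zero_of_subsingleton] at h2
      omega
    obtain ⟨y, hy⟩ := exists_ne (0 : ↥(H ⊓ t))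
    obtain ⟨m, hm⟩ := mem_span_singleton.mp y.2.2
    refine ⟨m, ?_, by rw [hm]; exact y.2.1⟩
    rintro rfl
    apply hy
    ext
    simp [← hm]

end AuxRank

/-- Axiom (3) holds for the arithmetic matroid of a list `X` of elements of a
finitely generated abelian group `G`: if `B = A ∪ T ∪ F` disjointly and
`rk(C) = rk(A) + |C ∩ F|` for all `A ⊆ C ⊆ B`, then
`m(A)·m(B) = m(A∪T)·m(A∪F)`. -/
theorem mult_axiom_three_representable {G : Type*} [AddCommGroup G] [AddGroup.FG G]
    {ι : Type*} [Fintype ι] [DecidableEq ι] (X : ι → G)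
    (A T F : Finset ι) (hAT : Disjoint A T) (hAF : Disjoint A F)
    (hTF : Disjoint T F)
    (hrk : ∀ C : Finset ι, A ⊆ C → C ⊆ A ∪ T ∪ F →
      grk (X '' ↑C) = grk (X '' ↑A) + (C ∩ F).card) :
    gmult (AddSubgroup.closure (X '' ↑A)) *
        gmult (AddSubgroup.closure (X '' ↑(A ∪ T ∪ F))) =
      gmult (AddSubgroup.closure (X '' ↑(A ∪ T))) *
        gmult (AddSubgroup.closure (X '' ↑(A ∪ F))) := by
  classical
  open Submodule Module QuotientAddGroup in
  -- `span` level facts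
  -- torsion of the generators of `T` modulo `A`
  have hT : ∀ t ∈ T, ∃ n : ℤ, n ≠ 0 ∧ n • X t ∈ span ℤ (X '' (↑A : Set ι)) := by
    intro t ht
    have hsub2 : insert t A ⊆ A ∪ T ∪ F := by
      intro x hx
      rcases Finset.mem_insert.mp hx with rfl | hx
      · exact Finset.mem_union.mpr (Or.inl (Finset.mem_union.mpr (Or.inr ht)))
      · exact Finset.mem_union.mpr (Or.inl (Finset.mem_union.mpr (Or.inl hx)))
    have hint : (insert t A) ∩ F = ∅ := by
      ext x
      simp only [Finset.mem_inter, Finset.mem_insert, Finset.notMem_empty, iff_false, not_and]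
      rintro (rfl | hxA)
      · exact fun hxF => (Finset.disjoint_left.mp hTF ht) hxF
      · exact fun hxF => (Finset.disjoint_left.mp hAF hxA) hxF
    have h1 := hrk (insert t A) (Finset.subset_insert t A) hsub2
    rw [hint, Finset.card_empty, add_zero, grk_eq_finrank_span, grk_eq_finrank_span] at h1
    have h2 : span ℤ (X '' (↑(insert t A) : Set ι)) =
        span ℤ (X '' (↑A : Set ι)) ⊔ span ℤ {X t} := by
      rw [Finset.coe_insert, Set.image_insert_eq, Submodule.span_insert, sup_comm]
    rw [h2] at h1
    exact exists_zsmul_mem_of_rank_eq _ _ h1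
  -- the span of the image of `F` is "independent" from `A`
  have hTFree : ∀ f ∈ span ℤ (X '' (↑F : Set ι)), ∀ n : ℤ, n ≠ 0 →
      n • f ∈ span ℤ (X '' (↑A : Set ι)) → f = 0 := by
    intro f hf n hn hnf
    rw [Set.image_eq_range] at hf
    obtain ⟨c, hc⟩ := (mem_span_range_iff_exists_fun ℤ).mp hf
    by_contra hf0
    have hex : ∃ j : (↑F : Set ι), c j ≠ 0 := by
      by_contra hall
      push_neg at hall
      apply hf0
      rw [← hc]
      simp [hall]
    obtain ⟨j0, hj0⟩ := hex
    have hj0F : (j0 : ι) ∈ F := j0.2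
    have hz : ∑ j : (↑F : Set ι), (n * c j) • X ↑j ∈ span ℤ (X '' (↑A : Set ι)) := by
      have heq : n • f = ∑ j : (↑F : Set ι), (n * c j) • X ↑j := by
        rw [← hc, Finset.smul_sum]
        simp [mul_smul]
      rwa [← heq]
    set S' := span ℤ (X '' (↑(A ∪ F.erase ↑j0) : Set ι)) with hS'
    have hsubA : span ℤ (X '' (↑A : Set ι)) ≤ S' := by
      apply span_mono
      apply Set.image_mono
      exact_mod_cast Finset.coe_subset.mpr Finset.subset_union_left
    have hterm : ∀ j : (↑F : Set ι), j ≠ j0 → (n * c j) • X ↑j ∈ S' := by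
      intro j hj
      apply S'.smul_mem
      apply subset_span
      refine ⟨(j : ι), ?_, rfl⟩
      rw [Finset.mem_coe, Finset.mem_union, Finset.mem_erase]
      exact Or.inr ⟨fun h => hj (Subtype.ext h), j.2⟩
    have hj0mem : (n * c j0) • X ↑j0 ∈ S' := by
      have hsum : ∑ j : (↑F : Set ι), (n * c j) • X ↑j
          = (n * c j0) • X ↑j0 + ∑ j ∈ Finset.univ.erase j0, (n * c j) • X ↑j :=
        (Finset.add_sum_erase _ _ (Finset.mem_univ j0)).symm
      have hrest : ∑ j ∈ Finset.univ.erase j0, (n * c j) • X ↑j ∈ S' :=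
        Submodule.sum_mem _ (fun j hj => hterm j (Finset.mem_erase.mp hj).1)
      have hdiff := S'.sub_mem (hsubA hz) hrest
      rwa [hsum, add_sub_cancel_right] at hdiff
    have hkey := rank_sup_span_singleton_eq S' (X ↑j0) (mul_ne_zero hn hj0) hj0mem
    have hspan : S' ⊔ span ℤ {X ↑j0} = span ℤ (X '' (↑(A ∪ F) : Set ι)) := by
      rw [sup_comm, ← Submodule.span_insert, ← Set.image_insert_eq, ← Finset.coe_insert]
      have heq2 : insert (↑j0 : ι) (A ∪ F.erase ↑j0) = A ∪ F := by
        ext x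
        simp only [Finset.mem_insert, Finset.mem_union, Finset.mem_erase]
        by_cases hx : x = ↑j0 <;> simp [hx, hj0F] <;> tauto
      rw [heq2]
    have i1 : (A ∪ F) ∩ F = F := by
      ext x
      simp only [Finset.mem_inter, Finset.mem_union]
      tauto
    have i2 : (A ∪ F.erase ↑j0) ∩ F = F.erase ↑j0 := by
      ext x
      simp only [Finset.mem_inter, Finset.mem_union, Finset.mem_erase]
      constructor
      · rintro ⟨hxA | hxE, hxF⟩
        · exact absurd hxF (Finset.disjoint_left.mp hAF hxA)
        · exact hxE
      · exact fun hxE => ⟨Or.inr hxE, hxE.2⟩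
    have e1 := hrk (A ∪ F) Finset.subset_union_left
      (Finset.union_subset (Finset.subset_union_left.trans Finset.subset_union_left)
        Finset.subset_union_right)
    have e2 := hrk (A ∪ F.erase ↑j0) Finset.subset_union_left
      (Finset.union_subset (Finset.subset_union_left.trans Finset.subset_union_left)
        ((Finset.erase_subset _ _).trans Finset.subset_union_right))
    rw [grk_eq_finrank_span, grk_eq_finrank_span, i1] at e1
    rw [grk_eq_finrank_span, grk_eq_finrank_span, i2, Finset.card_erase_of_mem hj0F] at e2
    rw [hspan] at hkey
    have hFpos : 0 < F.card := Finset.card_pos.mpr ⟨_, hj0F⟩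
    rw [← hS'] at e2
    omega
  -- now the subgroup level
  set HA := AddSubgroup.closure (X '' (↑A : Set ι)) with hHA
  set HT := AddSubgroup.closure (X '' (↑T : Set ι)) with hHT
  set HF := AddSubgroup.closure (X '' (↑F : Set ι)) with hHF
  have hcl : ∀ C D : Finset ι, AddSubgroup.closure (X '' (↑(C ∪ D) : Set ι)) =
      AddSubgroup.closure (X '' (↑C : Set ι)) ⊔ AddSubgroup.closure (X '' (↑D : Set ι)) := by
    intro C D
    rw [Finset.coe_union, Set.image_union, AddSubgroup.closure_union]
  have hTsat1 : HT ≤ satur HA := by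
    rw [hHT]
    apply (AddSubgroup.closure_le _).mpr
    rintro _ ⟨t, ht, rfl⟩
    obtain ⟨n, hn, hmem⟩ := hT t ht
    exact mem_satur'.mpr ⟨n, hn, mem_closure_iff_span.mpr hmem⟩
  have hTsat2 : HT ≤ satur (HA ⊔ HF) := by
    rw [hHT]
    apply (AddSubgroup.closure_le _).mpr
    rintro _ ⟨t, ht, rfl⟩
    obtain ⟨n, hn, hmem⟩ := hT t ht
    exact mem_satur'.mpr ⟨n, hn, AddSubgroup.mem_sup_left (mem_closure_iff_span.mpr hmem)⟩
  have hC2 : ∀ x, x ∈ HT → x ∈ HA ⊔ HF → x ∈ HA := by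
    intro x hxT hxAF
    obtain ⟨a, ha, f, hfm, rfl⟩ := AddSubgroup.mem_sup.mp hxAF
    obtain ⟨n, hn, hnx⟩ := mem_satur'.mp (hTsat1 hxT)
    have hfa : n • f ∈ HA := by
      have h5 : n • (a + f) - n • a ∈ HA := AddSubgroup.sub_mem _ hnx (AddSubgroup.zsmul_mem _ ha n)
      simpa [smul_add] using h5
    have hf0 : f = 0 :=
      hTFree f (mem_closure_iff_span.mp hfm) n hn (mem_closure_iff_span.mp hfa)
    rw [hf0, add_zero]
    exact ha
  have heqsub : HA.addSubgroupOf HT = (HA ⊔ HF).addSubgroupOf HT := by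
    ext x
    simp only [AddSubgroup.mem_addSubgroupOf]
    exact ⟨fun h => AddSubgroup.mem_sup_left h, fun h => hC2 x.1 x.2 h⟩
  have hk : Nat.card (HT.map (QuotientAddGroup.mk' HA))
      = Nat.card (HT.map (QuotientAddGroup.mk' (HA ⊔ HF))) := by
    rw [card_map_mk', card_map_mk', heqsub]
  have key1 := main_step HA HT hTsat1
  have key2 := main_step (HA ⊔ HF) HT hTsat2
  rw [hcl (A ∪ T) F, hcl A T, hcl A F, gmult_eq_card_torsion, gmult_eq_card_torsion,
    gmult_eq_card_torsion, gmult_eq_card_torsion, key1, key2, hk,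
    sup_right_comm HA HF HT]
  ring
end

section
/- For a finite list X of vectors in ℤ^m, the index of ⟨X⟩ in its saturation (the maximal subgroup of ℤ^m in which ⟨X⟩ has finite index) equals the greatest common divisor of the minors of order rk(X) of the matrix whose columns are the elements of X. -/
open Module Finset

lemma alt_dvd {R M ι : Type*} [CommRing R] [AddCommGroup M] [Module R M] [Fintype ι]
    [DecidableEq ι] {r : ℕ} (φ : M [⋀^Fin r]→ₗ[R] R) (w : ι → M) (v : Fin r → M)
    (hv : ∀ j, v j ∈ Submodule.span R (Set.range w)) {d : R}
    (hd : ∀ g : Fin r → ι, Function.Injective g → d ∣ φ (w ∘ g)) : d ∣ φ v := by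
  choose c hc using fun j => (Submodule.mem_span_range_iff_exists_fun R).mp (hv j)
  have h1 : φ v = ∑ g : Fin r → ι, (∏ j, c j (g j)) • φ (w ∘ g) := by
    have : v = fun j => ∑ i, c j i • w i := by
      funext j; exact (hc j).symm
    rw [this]
    have := φ.toMultilinearMap.map_sum (g := fun j i => c j i • w i)
    rw [show φ (fun j => ∑ i, c j i • w i) = φ.toMultilinearMap (fun j => ∑ i, c j i • w i) from rfl,
      this]
    refine Finset.sum_congr rfl fun g _ => ?_
    exact φ.toMultilinearMap.map_smul_univ (fun j => c j (g j)) (fun j => w (g j))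
  rw [h1]
  refine Finset.dvd_sum fun g _ => ?_
  by_cases hg : Function.Injective g
  · rw [smul_eq_mul]; exact (hd g hg).mul_left _
  · obtain ⟨i, j, hij, hne⟩ : ∃ i j, g i = g j ∧ i ≠ j := by
      simp only [Function.Injective, not_forall] at hg
      obtain ⟨i, j, h1, h2⟩ := hg
      exact ⟨i, j, h1, h2⟩
    rw [show φ (w ∘ g) = 0 from φ.map_eq_zero_of_eq _ (by simp [Function.comp, hij]) hne]
    simp



/-- For a finite list `X` of vectors in `ℤ^m`, the index of `⟨X⟩` in its
saturation equals the gcd of the minors of order `rk(X)` of the matrix whose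
columns are the elements of `X`. -/
theorem index_eq_gcd_minors {m n : ℕ} (X : Fin n → (Fin m → ℤ)) :
    gmult (AddSubgroup.closure (Set.range X)) =
      Finset.univ.gcd
        (fun p : (Fin (grk (Set.range X)) ↪ Fin m) ×
                 (Fin (grk (Set.range X)) ↪ Fin n) =>
          (Matrix.det (Matrix.of fun i j => X (p.2 j) (p.1 i))).natAbs) := by
  classical
  set N : Submodule ℤ (Fin m → ℤ) := Submodule.span ℤ (Set.range X) with hNdef
  obtain ⟨r, bM, bN, f, a, hsnf⟩ := N.smithNormalForm (Pi.basisFun ℤ (Fin m))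
  set u : Fin r → (Fin m → ℤ) := fun i => bM (f i) with hu
  set wv : Fin r → (Fin m → ℤ) := fun i => (bN i : Fin m → ℤ) with hwv
  have hH : AddSubgroup.closure (Set.range X) = N.toAddSubgroup :=
    (Submodule.span_int_eq_addSubgroupClosure _).symm
  -- rank
  have hgrk : grk (Set.range X) = r := by
    show Module.finrank ℤ (AddSubgroup.closure (Set.range X)) = r
    rw [hH]
    have e2 : Module.finrank ℤ ↥(N.toAddSubgroup) = Module.finrank ℤ ↥N :=
      (AddEquiv.toIntLinearEquiv
        ⟨⟨fun x => ⟨x.1, x.2⟩, fun x => ⟨x.1, x.2⟩, fun _ => rfl, fun _ => rfl⟩,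
          fun _ _ => rfl⟩).finrank_eq
    rw [e2, finrank_eq_card_basis bN, Fintype.card_fin]
  rw [hgrk]
  -- nonzero diagonal entries
  have a_ne : ∀ i, a i ≠ 0 := by
    intro i hai
    have h := hsnf i
    rw [hai, zero_smul] at h
    exact bN.ne_zero i (Submodule.coe_eq_zero.mp h)
  -- N = span of range wv
  have hNwv : Submodule.span ℤ (Set.range wv) = N := by
    have h1 : Set.range wv = N.subtype '' (Set.range bN) := by
      rw [← Set.range_comp]; rfl
    rw [h1, Submodule.span_image, Basis.span_eq, Submodule.map_top, Submodule.range_subtype]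
  -- N ≤ S'
  set S' : Submodule ℤ (Fin m → ℤ) := Submodule.span ℤ (Set.range u) with hS'
  have hNS : N ≤ S' := by
    rw [← hNwv, Submodule.span_le]
    rintro _ ⟨i, rfl⟩
    rw [hwv]
    simp only [hsnf i]
    exact Submodule.smul_mem _ _ (Submodule.subset_span ⟨i, rfl⟩)
  -- repr computation
  have hrep : ∀ (d : Fin r → ℤ) (j : Fin r), bM.repr (∑ i, d i • u i) (f j) = d j := by
    intro d j
    simp only [map_sum, map_smul, hu, Basis.repr_self, Finsupp.coe_finset_sum, Finset.sum_apply,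
      Finsupp.coe_smul, Pi.smul_apply, Finsupp.single_apply, f.injective.eq_iff, smul_eq_mul,
      mul_ite, mul_one, mul_zero]
    rw [Finset.sum_ite_eq' Finset.univ j d]
    simp
  have hreq0 : ∀ (d : Fin r → ℤ) (q : Fin m), q ∉ Set.range f →
      bM.repr (∑ i, d i • u i) q = 0 := by
    intro d q hq
    have hq' : ∀ i : Fin r, f i ≠ q := by simpa [Set.mem_range] using hq
    simp only [map_sum, map_smul, hu, Basis.repr_self, Finsupp.coe_finset_sum, Finset.sum_apply,
      Finsupp.coe_smul, Pi.smul_apply, Finsupp.single_apply, smul_eq_mul]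
    refine Finset.sum_eq_zero fun i _ => ?_
    simp [hq' i]
  -- membership in S'
  have hmemS : ∀ x : Fin m → ℤ, x ∈ S' ↔ ∀ q : Fin m, q ∉ Set.range f → bM.repr x q = 0 := by
    intro x
    constructor
    · intro hx q hq
      obtain ⟨d, rfl⟩ := (Submodule.mem_span_range_iff_exists_fun ℤ).mp hx
      exact hreq0 d q hq
    · intro hx
      have hx2 : x = ∑ q ∈ Finset.univ.map f, bM.repr x q • bM q := by
        rw [Finset.sum_subset (Finset.subset_univ _), bM.sum_repr x]
        intro q _ hq
        rw [hx q (by simpa using hq), zero_smul]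
      rw [hx2, Finset.sum_map]
      exact Submodule.sum_mem _ fun i _ =>
        Submodule.smul_mem _ _ (Submodule.subset_span ⟨i, rfl⟩)
  have hK1 : ∀ x ∈ S', x = ∑ i, bM.repr x (f i) • u i := by
    intro x hx
    obtain ⟨d, rfl⟩ := (Submodule.mem_span_range_iff_exists_fun ℤ).mp hx
    refine Finset.sum_congr rfl fun i _ => ?_
    rw [hrep d i]
  -- kernel characterization
  have hK2 : ∀ x ∈ S', (x ∈ N ↔ ∀ i, a i ∣ bM.repr x (f i)) := by
    intro x hx
    constructor
    · intro hxN i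
      rw [← hNwv] at hxN
      obtain ⟨d, rfl⟩ := (Submodule.mem_span_range_iff_exists_fun ℤ).mp hxN
      have : ∑ j, d j • wv j = ∑ j, (d j * a j) • u j := by
        refine Finset.sum_congr rfl fun j _ => ?_
        rw [hwv]; simp only [hsnf j, smul_smul]; rfl
      rw [this, hrep (fun j => d j * a j) i]
      exact Dvd.intro_left _ rfl
    · intro hdvd
      choose c hc using hdvd
      have hx2 : x = ∑ i, c i • wv i := by
        conv_lhs => rw [hK1 x hx]
        refine Finset.sum_congr rfl fun i _ => ?_
        rw [hc i, hwv]; simp only [hsnf i, smul_smul, mul_comm]; rfl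
      rw [hx2, ← hNwv]
      exact Submodule.sum_mem _ fun i _ =>
        Submodule.smul_mem _ _ (Submodule.subset_span ⟨i, rfl⟩)
  -- saturation
  have hsat : satur (AddSubgroup.closure (Set.range X)) = S'.toAddSubgroup := by
    apply le_antisymm
    · intro x hx
      have hx' : IsOfFinAddOrder
          ((QuotientAddGroup.mk' (AddSubgroup.closure (Set.range X))) x) := hx
      obtain ⟨k, hk, hkx⟩ := isOfFinAddOrder_iff_nsmul_eq_zero.mp hx'
      have hkx2 : (k : ℤ) • x ∈ N := by
        have : (QuotientAddGroup.mk' (AddSubgroup.closure (Set.range X))) (k • x) = 0 := by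
          rw [map_nsmul, hkx]
        rw [QuotientAddGroup.mk'_apply, QuotientAddGroup.eq_zero_iff] at this
        have hmem : k • x ∈ AddSubgroup.closure (Set.range X) := this
        rw [hH, Submodule.mem_toAddSubgroup] at hmem
        rwa [natCast_zsmul]
      have hkS : (k : ℤ) • x ∈ S' := hNS hkx2
      rw [Submodule.mem_toAddSubgroup]
      rw [hmemS] at hkS ⊢
      intro q hq
      have h1 := hkS q hq
      rw [map_smul, Finsupp.coe_smul, Pi.smul_apply, smul_eq_mul] at h1
      have hk0 : (k : ℤ) ≠ 0 := Int.natCast_ne_zero.mpr (Nat.pos_iff_ne_zero.mp hk)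
      exact (mul_eq_zero.mp h1).resolve_left hk0
    · rw [show S'.toAddSubgroup = AddSubgroup.closure (Set.range u) from
        Submodule.span_int_eq_addSubgroupClosure _]
      rw [AddSubgroup.closure_le]
      rintro _ ⟨i, rfl⟩
      show IsOfFinAddOrder ((QuotientAddGroup.mk' (AddSubgroup.closure (Set.range X))) (u i))
      refine isOfFinAddOrder_iff_nsmul_eq_zero.mpr ⟨(a i).natAbs, Int.natAbs_pos.mpr (a_ne i), ?_⟩
      rw [← map_nsmul]
      rw [QuotientAddGroup.mk'_apply, QuotientAddGroup.eq_zero_iff]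
      rw [hH, Submodule.mem_toAddSubgroup, ← natCast_zsmul]
      rcases Int.natAbs_eq (a i) with h | h
      · rw [← h]
        have : a i • u i ∈ N := by rw [← hsnf i]; exact (bN i).2
        exact this
      · have h2 : ((a i).natAbs : ℤ) = -(a i) := by omega
        rw [h2, neg_smul]
        refine Submodule.neg_mem _ ?_
        rw [← hsnf i]; exact (bN i).2
  -- LHS
  have lhs_eq : gmult (AddSubgroup.closure (Set.range X)) = ∏ i, (a i).natAbs := by
    have h0 : gmult (AddSubgroup.closure (Set.range X)) =
        Nat.card (↥(S'.toAddSubgroup) ⧸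
          (AddSubgroup.closure (Set.range X)).addSubgroupOf S'.toAddSubgroup) := by
      show AddSubgroup.relIndex _ _ = _
      rw [hsat]
      rfl
    let Φ : ↥(S'.toAddSubgroup) →+ (∀ i : Fin r, ZMod (a i).natAbs) :=
      AddMonoidHom.mk' (fun x => fun i => ((bM.repr x.1 (f i) : ℤ) : ZMod (a i).natAbs)) (by
        intro x y
        funext i
        have : ((x + y : ↥(S'.toAddSubgroup)) : Fin m → ℤ) = (x : Fin m → ℤ) + y := rfl
        simp [this, map_add])
    have hΦ : ∀ (x : ↥(S'.toAddSubgroup)) (i : Fin r),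
        Φ x i = ((bM.repr x.1 (f i) : ℤ) : ZMod (a i).natAbs) := fun _ _ => rfl
    have hsurj : Function.Surjective Φ := by
      intro y
      choose z hz using fun i => ZMod.intCast_surjective (y i)
      refine ⟨⟨∑ i, z i • u i, ?_⟩, ?_⟩
      · exact Submodule.sum_mem _ fun i _ =>
          Submodule.smul_mem _ _ (Submodule.subset_span ⟨i, rfl⟩)
      · funext i
        rw [hΦ]
        show (((bM.repr (∑ i, z i • u i) (f i) : ℤ)) : ZMod (a i).natAbs) = y i
        rw [hrep z i, hz i]
    have hker : Φ.ker = (AddSubgroup.closure (Set.range X)).addSubgroupOf S'.toAddSubgroup := by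
      ext x
      rw [AddMonoidHom.mem_ker, AddSubgroup.mem_addSubgroupOf]
      have hx1 : x.1 ∈ S' := x.2
      rw [hH, Submodule.mem_toAddSubgroup]
      constructor
      · intro h
        refine (hK2 x.1 hx1).mpr fun i => ?_
        have hi : ((bM.repr x.1 (f i) : ℤ) : ZMod (a i).natAbs) = 0 := by
          rw [← hΦ x i, h]; rfl
        have := (ZMod.intCast_zmod_eq_zero_iff_dvd _ _).mp hi
        exact Int.natAbs_dvd.mp this
      · intro h
        funext i
        rw [hΦ]
        show (((bM.repr x.1 (f i) : ℤ)) : ZMod (a i).natAbs) = 0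
        rw [ZMod.intCast_zmod_eq_zero_iff_dvd]
        exact Int.natAbs_dvd.mpr ((hK2 x.1 hx1).mp h i)
    rw [h0, ← hker,
      Nat.card_congr (QuotientAddGroup.quotientKerEquivOfSurjective Φ hsurj).toEquiv,
      Nat.card_pi]
    exact Finset.prod_congr rfl fun i _ => Nat.card_zmod _
  -- RHS
  have rhs_eq : Finset.univ.gcd
      (fun p : (Fin r ↪ Fin m) × (Fin r ↪ Fin n) =>
        (Matrix.det (Matrix.of fun i j => X (p.2 j) (p.1 i))).natAbs) = (∏ i, a i).natAbs := by
    set G : ℕ := Finset.univ.gcd (fun p : (Fin r ↪ Fin m) × (Fin r ↪ Fin n) =>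
        (Matrix.det (Matrix.of fun i j => X (p.2 j) (p.1 i))).natAbs) with hG
    have hexp : ∀ y : Fin m → ℤ, ∑ k, y k • (Pi.basisFun ℤ (Fin m)) k = y := by
      intro y
      have := (Pi.basisFun ℤ (Fin m)).sum_repr y
      simpa using this
    let ψ : ((Fin m → ℤ)) [⋀^Fin r]→ₗ[ℤ] ℤ :=
      (Matrix.detRowAlternating).compLinearMap (LinearMap.pi fun i => bM.coord (f i))
    have hψapp : ∀ v : Fin r → (Fin m → ℤ),
        ψ v = (Matrix.of fun j i => bM.coord (f i) (v j)).det := fun v => rfl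
    have claimA : ∀ h : Fin r → Fin n, Function.Injective h → (G : ℤ) ∣ ψ (X ∘ h) := by
      intro h hinj
      rw [hψapp, ← Matrix.det_transpose]
      show (G : ℤ) ∣ Matrix.detRowAlternating (fun i => fun j => bM.coord (f i) (X (h j)))
      refine alt_dvd _ (fun k : Fin m => (fun j : Fin r => X (h j) k)) _ (fun i => ?_)
        (fun gg hgg => ?_)
      · rw [Submodule.mem_span_range_iff_exists_fun]
        refine ⟨fun k => bM.coord (f i) (Pi.basisFun ℤ (Fin m) k), ?_⟩
        funext j
        have : bM.coord (f i) (X (h j))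
            = ∑ k, X (h j) k * bM.coord (f i) (Pi.basisFun ℤ (Fin m) k) := by
          conv_lhs => rw [← hexp (X (h j))]
          rw [map_sum]
          simp only [map_smul, smul_eq_mul]
        simp only [Finset.sum_apply, Pi.smul_apply, smul_eq_mul, this]
        exact Finset.sum_congr rfl fun k _ => mul_comm _ _
      · have heq : Matrix.detRowAlternating ((fun k : Fin m => (fun j : Fin r => X (h j) k)) ∘ gg)
            = (Matrix.of fun i j => X ((⟨h, hinj⟩ : Fin r ↪ Fin n) j)
                ((⟨gg, hgg⟩ : Fin r ↪ Fin m) i)).det := rfl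
        rw [heq]
        have hdvd := Finset.gcd_dvd
          (f := fun p : (Fin r ↪ Fin m) × (Fin r ↪ Fin n) =>
            (Matrix.det (Matrix.of fun i j => X (p.2 j) (p.1 i))).natAbs)
          (Finset.mem_univ ((⟨gg, hgg⟩, ⟨h, hinj⟩) :
            (Fin r ↪ Fin m) × (Fin r ↪ Fin n)))
        exact Int.natAbs_dvd_natAbs.mp (by simpa using hdvd)
    have hψw : ψ wv = ∏ i, a i := by
      rw [hψapp]
      have hdiag : (Matrix.of fun j i => bM.coord (f i) (wv j)) = Matrix.diagonal a := by
        ext j i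
        rw [Matrix.of_apply]
        simp only [hwv, hsnf j, map_smul, smul_eq_mul, Basis.coord_apply, Basis.repr_self,
          Finsupp.single_apply, f.injective.eq_iff, Matrix.diagonal_apply]
        by_cases hji : j = i <;> simp [hji]
      rw [hdiag, Matrix.det_diagonal]
    have claimB : (G : ℤ) ∣ ∏ i, a i := by
      rw [← hψw]
      exact alt_dvd ψ X wv (fun j => (bN j).2) (fun g hg => claimA g hg)
    have claimC : ∀ p : (Fin r ↪ Fin m) × (Fin r ↪ Fin n),
        (∏ i, a i) ∣ (Matrix.of fun i j => X (p.2 j) (p.1 i)).det := by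
      intro p
      let φ : ((Fin m → ℤ)) [⋀^Fin r]→ₗ[ℤ] ℤ :=
        (Matrix.detRowAlternating).compLinearMap (LinearMap.funLeft ℤ ℤ p.1)
      rw [← Matrix.det_transpose]
      show (∏ i, a i) ∣ φ (X ∘ p.2)
      refine alt_dvd φ wv (X ∘ p.2) (fun j => ?_) (fun gg hgg => ?_)
      · rw [hNwv]
        exact Submodule.subset_span ⟨p.2 j, rfl⟩
      · have h1 : wv ∘ gg = fun j => a (gg j) • u (gg j) := by
          funext j; simp only [Function.comp, hwv, hsnf (gg j), hu]
        rw [h1]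
        have h2 := φ.toMultilinearMap.map_smul_univ (fun j => a (gg j)) (fun j => u (gg j))
        rw [show φ (fun j => a (gg j) • u (gg j))
            = (∏ j, a (gg j)) • φ (fun j => u (gg j)) from h2]
        have h3 : ∏ j, a (gg j) = ∏ i, a i :=
          Function.Bijective.prod_comp (Finite.injective_iff_bijective.mp hgg) a
        rw [h3, smul_eq_mul]
        exact Dvd.intro _ rfl
    refine Nat.dvd_antisymm ?_ ?_
    · have := Int.natAbs_dvd_natAbs.mpr claimB
      simpa using this
    · exact Finset.dvd_gcd fun p _ => Int.natAbs_dvd_natAbs.mpr (claimC p)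
  rw [lhs_eq, rhs_eq]
  exact (map_prod Int.natAbsHom a Finset.univ).symm
end

section
/- Deletion-contraction for a free vector: if (M_X, m) is an arithmetic matroid and v ∈ X is a free vector (rk(X\{v}) = rk(X)-1 and rk({v}) = 1), then M_X(x,y) = (x-1)·M_{X_1}(x,y) + M_{X_2}(x,y), where X_1 and X_2 denote the deletion and contraction of v. -/
open Finset

variable {α : Type*} [Fintype α] [DecidableEq α]

/-- Deletion-contraction for a free vector:
`M_X(x,y) = (x-1)·M_{X₁}(x,y) + M_{X₂}(x,y)`, where `X₁` is the deletion and
`X₂` the contraction of the free vector `v`. -/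
theorem deletion_contraction_free (rk : Finset α → ℕ) (m : Finset α → ℕ)
    (hm : ∀ A, 0 < m A) (hrk : RankAxioms rk) (hax : MultAxioms rk m)
    (v : α)
    (hfree : rk (Finset.univ.erase v) + 1 = rk Finset.univ ∧ rk {v} = 1)
    (x y : ℤ) :
    (∑ A ∈ (Finset.univ : Finset α).powerset,
        (m A : ℤ) * (x - 1) ^ (rk Finset.univ - rk A) *
          (y - 1) ^ (A.card - rk A)) =
      (x - 1) * (∑ A ∈ (Finset.univ.erase v).powerset,
        (m A : ℤ) * (x - 1) ^ (rk (Finset.univ.erase v) - rk A) *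
          (y - 1) ^ (A.card - rk A)) +
      (∑ A ∈ (Finset.univ.erase v).powerset,
        (m (insert v A) : ℤ) *
          (x - 1) ^ ((rk Finset.univ - rk {v}) - (rk (insert v A) - rk {v})) *
          (y - 1) ^ (A.card - (rk (insert v A) - rk {v}))) := by
  obtain ⟨hdel, hv⟩ := hfree
  obtain ⟨hcard, hmono, hsub⟩ := hrk
  have hvnot : v ∉ (Finset.univ : Finset α).erase v := notMem_erase v _
  have huniv : (Finset.univ : Finset α) = insert v (Finset.univ.erase v) :=
    (insert_erase (mem_univ v)).symm
  rw [show ((Finset.univ : Finset α).powerset) = (insert v (Finset.univ.erase v)).powerset by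
      rw [← huniv],
    Finset.sum_powerset_insert hvnot]
  congr 1
  · rw [Finset.mul_sum]
    refine Finset.sum_congr rfl fun A hA => ?_
    have hA' := Finset.mem_powerset.mp hA
    have h1 : rk A ≤ rk (Finset.univ.erase v) := hmono _ _ hA'
    have h2 : rk Finset.univ - rk A = (rk (Finset.univ.erase v) - rk A) + 1 := by omega
    rw [h2, pow_succ]
    ring
  · refine Finset.sum_congr rfl fun A hA => ?_
    have hA' := Finset.mem_powerset.mp hA
    have hvA : v ∉ A := fun h => hvnot (hA' h)
    have hle : rk {v} ≤ rk (insert v A) := hmono _ _ (by simp)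
    have hle2 : rk (insert v A) ≤ rk Finset.univ := hmono _ _ (subset_univ _)
    have hcardins : (insert v A).card = A.card + 1 := card_insert_of_notMem hvA
    have e1 : rk Finset.univ - rk (insert v A) =
        (rk Finset.univ - rk {v}) - (rk (insert v A) - rk {v}) := by omega
    have e2 : (insert v A).card - rk (insert v A) =
        A.card - (rk (insert v A) - rk {v}) := by
      have := hcard (insert v A)
      omega
    rw [e1, e2]
end

section
/- Deletion-contraction for a proper vector: if (M_X, m) is an arithmetic matroid and v ∈ X is a proper vector (rk({v}) = 1 and rk(X\{v}) = rk(X)), then M_X(x,y) = M_{X_1}(x,y) + M_{X_2}(x,y), where X_1 and X_2 denote the deletion and contraction of v. -/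
open Finset

variable {α : Type*} [Fintype α] [DecidableEq α]

/-- Deletion-contraction for a proper vector:
`M_X(x,y) = M_{X₁}(x,y) + M_{X₂}(x,y)`, where `X₁` is the deletion and
`X₂` the contraction of the proper vector `v`. -/
theorem deletion_contraction_proper (rk : Finset α → ℕ) (m : Finset α → ℕ)
    (hm : ∀ A, 0 < m A) (hrk : RankAxioms rk) (hax : MultAxioms rk m)
    (v : α)
    (hproper : rk {v} = 1 ∧ rk (Finset.univ.erase v) = rk Finset.univ)
    (x y : ℤ) :
    (∑ A ∈ (Finset.univ : Finset α).powerset,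
        (m A : ℤ) * (x - 1) ^ (rk Finset.univ - rk A) *
          (y - 1) ^ (A.card - rk A)) =
      (∑ A ∈ (Finset.univ.erase v).powerset,
        (m A : ℤ) * (x - 1) ^ (rk (Finset.univ.erase v) - rk A) *
          (y - 1) ^ (A.card - rk A)) +
      (∑ A ∈ (Finset.univ.erase v).powerset,
        (m (insert v A) : ℤ) *
          (x - 1) ^ ((rk Finset.univ - rk {v}) - (rk (insert v A) - rk {v})) *
          (y - 1) ^ (A.card - (rk (insert v A) - rk {v}))) := by
  obtain ⟨hv1, hv2⟩ := hproper
  have hvnot : v ∉ Finset.univ.erase v := Finset.notMem_erase v _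
  have hsplit : ∀ f : Finset α → ℤ,
      ∑ A ∈ (Finset.univ : Finset α).powerset, f A =
        ∑ A ∈ (Finset.univ.erase v).powerset, f A +
          ∑ A ∈ (Finset.univ.erase v).powerset, f (insert v A) := by
    intro f
    rw [← Finset.sum_powerset_insert hvnot, Finset.insert_erase (Finset.mem_univ v)]
  rw [hsplit]
  congr 1
  · exact Finset.sum_congr rfl fun A _ => by rw [hv2]
  · refine Finset.sum_congr rfl fun A hA => ?_
    have hAsub : A ⊆ Finset.univ.erase v := Finset.mem_powerset.mp hA
    have hvA : v ∉ A := fun h => hvnot (hAsub h)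
    have hr1 : 1 ≤ rk (insert v A) := by
      rw [← hv1]
      exact hrk.2.1 {v} (insert v A) (by simp)
    have hcard : (insert v A).card = A.card + 1 := Finset.card_insert_of_notMem hvA
    rw [hv1, hcard]
    have h1 : rk Finset.univ - rk (insert v A) =
        rk Finset.univ - 1 - (rk (insert v A) - 1) := by omega
    have h2 : A.card + 1 - rk (insert v A) =
        A.card - (rk (insert v A) - 1) := by omega
    rw [h1, h2]
end

section
/- In a molecule (arithmetic matroid with no proper vectors) with unique basis B, the value m(X) divides μ(S) := Σ_{T⊇S} (-1)^{|T|-|S|} m(T) for every maximal-rank sublist S ⊆ X (i.e., every S ⊇ B), and m(B) = m(X)·c(B) where c(B) = Σ_{T⊇B} μ(T)/m(X) divides m(∅). -/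
open Finset

variable {α : Type*} [Fintype α] [DecidableEq α]

/-- Sign sum over an interval in the Boolean lattice. -/
lemma sign_sum_Icc {B T : Finset α} (hBT : B ⊆ T) :
    ∑ S ∈ Finset.Icc B T, (-1 : ℤ) ^ (T.card - S.card) =
      if T = B then 1 else 0 := by
  have hbij : ∑ S ∈ Finset.Icc B T, (-1 : ℤ) ^ (T.card - S.card) =
      ∑ U ∈ (T \ B).powerset, (-1 : ℤ) ^ ((T \ B).card - U.card) := by
    refine Finset.sum_nbij' (fun S => S \ B) (fun U => B ∪ U) ?_ ?_ ?_ ?_ ?_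
    · intro S hS
      rw [Finset.mem_Icc] at hS
      exact Finset.mem_powerset.mpr (Finset.sdiff_subset_sdiff hS.2 le_rfl)
    · intro U hU
      rw [Finset.mem_powerset] at hU
      rw [Finset.mem_Icc]
      exact ⟨Finset.subset_union_left, Finset.union_subset hBT
        (hU.trans (Finset.sdiff_subset))⟩
    · intro S hS
      rw [Finset.mem_Icc] at hS
      exact Finset.union_sdiff_of_subset hS.1
    · intro U hU
      rw [Finset.mem_powerset] at hU
      have hd : Disjoint B U := Finset.disjoint_of_subset_right hU
        (Finset.sdiff_disjoint.symm)
      show (B ∪ U) \ B = U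
      rw [Finset.union_sdiff_cancel_left hd]
    · intro S hS
      rw [Finset.mem_Icc] at hS
      show (-1 : ℤ) ^ (T.card - S.card) = (-1 : ℤ) ^ ((T \ B).card - (S \ B).card)
      congr 1
      have h1 : S.card ≤ T.card := Finset.card_le_card hS.2
      have h2 : (S \ B).card = S.card - B.card := Finset.card_sdiff_of_subset hS.1
      have h3 : (T \ B).card = T.card - B.card := Finset.card_sdiff_of_subset (hS.1.trans hS.2)
      have h4 : B.card ≤ S.card := Finset.card_le_card hS.1
      omega
  rw [hbij]
  have hsgn : ∀ U ∈ (T \ B).powerset,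
      (-1 : ℤ) ^ ((T \ B).card - U.card) =
        (-1 : ℤ) ^ (T \ B).card * (-1 : ℤ) ^ U.card := by
    intro U hU
    rw [Finset.mem_powerset] at hU
    have hle : U.card ≤ (T \ B).card := Finset.card_le_card hU
    have h1 : (-1 : ℤ) ^ (T \ B).card =
        (-1 : ℤ) ^ ((T \ B).card - U.card) * (-1 : ℤ) ^ U.card := by
      rw [← pow_add]
      congr 1
      omega
    rw [h1, mul_assoc, ← pow_add, show U.card + U.card = 2 * U.card by omega,
      pow_mul]
    norm_num
  rw [Finset.sum_congr rfl hsgn, ← Finset.mul_sum,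
    Finset.sum_powerset_neg_one_pow_card]
  by_cases h : T = B
  · simp [h]
  · have : T \ B ≠ ∅ := by
      intro hc
      exact h (Finset.Subset.antisymm
        (by rw [← Finset.sdiff_eq_empty_iff_subset] at *; exact hc) hBT)
    simp [h, this]

/-- In a molecule (an arithmetic matroid with no proper vectors) with unique
basis `B`: `m(X)` divides `μ(S) = Σ_{T ⊇ S} (-1)^{|T|-|S|} m(T)` for every
maximal-rank sublist `S ⊇ B`, and `m(B) = m(X)·c(B)` where
`c(B) = (Σ_{T ⊇ B} μ(T))/m(X)` divides `m(∅)`. -/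
theorem molecule_divisibility (rk : Finset α → ℕ) (m : Finset α → ℕ)
    (hm : ∀ A, 0 < m A) (hrk : RankAxioms rk) (hax : MultAxioms rk m)
    (hmol : ∀ v : α, ¬(rk {v} = 1 ∧ rk (Finset.univ.erase v) = rk Finset.univ))
    (B : Finset α) (hB : rk B = B.card ∧ rk B = rk Finset.univ)
    (hBuniq : ∀ B' : Finset α, rk B' = B'.card ∧ rk B' = rk Finset.univ → B' = B) :
    (∀ S : Finset α, B ⊆ S →
      (m Finset.univ : ℤ) ∣
        ∑ T ∈ Finset.Icc S Finset.univ, (-1 : ℤ) ^ (T.card - S.card) * m T) ∧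
    (∃ c : ℕ,
      ((c : ℤ) * m Finset.univ =
        ∑ S ∈ Finset.Icc B Finset.univ,
          ∑ T ∈ Finset.Icc S Finset.univ, (-1 : ℤ) ^ (T.card - S.card) * m T) ∧
      m B = m Finset.univ * c ∧ c ∣ m ∅) := by
  obtain ⟨hcard, hmono, hsub⟩ := hrk
  obtain ⟨hax1, hax2, hax3, hax4, hax5⟩ := hax
  have hr0 : rk ∅ = 0 := Nat.le_zero.mp (by simpa using hcard ∅)
  -- subsets of B have full rank
  have hrsub : ∀ A : Finset α, A ⊆ B → rk A = A.card := by
    intro A hA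
    have h1 : rk A ≤ A.card := hcard A
    have h2 := hsub A (B \ A)
    rw [Finset.union_sdiff_of_subset hA, Finset.inter_sdiff_self, hr0] at h2
    have h3 : rk (B \ A) ≤ (B \ A).card := hcard _
    have h4 : (B \ A).card = B.card - A.card := Finset.card_sdiff_of_subset hA
    have h5 : A.card ≤ B.card := Finset.card_le_card hA
    omega
  -- every element outside B is a loop
  have hloop : ∀ v : α, v ∉ B → rk {v} = 0 := by
    intro v hv
    have h1 : rk {v} ≤ 1 := by simpa using hcard {v}
    rcases Nat.lt_or_ge (rk {v}) 1 with h | h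
    · omega
    · exfalso
      apply hmol v
      refine ⟨by omega, ?_⟩
      have hBsub : B ⊆ Finset.univ.erase v := fun x hx =>
        Finset.mem_erase.mpr ⟨fun hxv => hv (hxv ▸ hx), Finset.mem_univ x⟩
      have := hmono B (Finset.univ.erase v) hBsub
      have := hmono (Finset.univ.erase v) Finset.univ (Finset.subset_univ _)
      omega
  -- rank of any set
  have hrC : ∀ C : Finset α, rk C = (C ∩ B).card := by
    have key : ∀ n (C : Finset α), (C \ B).card = n → rk C = (C ∩ B).card := by
      intro n
      induction n with
      | zero =>
        intro C h
        have hC : C ⊆ B := Finset.sdiff_eq_empty_iff_subset.mp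
          (Finset.card_eq_zero.mp h)
        rw [Finset.inter_eq_left.mpr hC]
        exact hrsub C hC
      | succ n ih =>
        intro C h
        obtain ⟨v, hv⟩ : (C \ B).Nonempty := Finset.card_pos.mp (by omega)
        rw [Finset.mem_sdiff] at hv
        obtain ⟨hvC, hvB⟩ := hv
        have hsub2 := hsub (C.erase v) {v}
        have hunion : C.erase v ∪ {v} = C := by
          ext x
          by_cases hx : x = v <;>
            simp [hx, hvC, Finset.mem_union, Finset.mem_erase]
        have hint : C.erase v ∩ {v} = ∅ := by
          ext x
          simp only [Finset.mem_inter, Finset.mem_erase, Finset.mem_singleton,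
            Finset.notMem_empty, iff_false]
          rintro ⟨⟨hne, _⟩, rfl⟩
          exact hne rfl
        rw [hunion, hint, hr0, hloop v hvB] at hsub2
        have hle : rk (C.erase v) ≤ rk C := hmono _ _ (Finset.erase_subset _ _)
        have herase : (C.erase v \ B).card = n := by
          have : C.erase v \ B = (C \ B).erase v := by
            ext x
            simp only [Finset.mem_sdiff, Finset.mem_erase]
            tauto
          rw [this, Finset.card_erase_of_mem (Finset.mem_sdiff.mpr ⟨hvC, hvB⟩), h]
          omega
        have hinter : C.erase v ∩ B = C ∩ B := by
          ext x
          simp only [Finset.mem_inter, Finset.mem_erase]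
          constructor
          · rintro ⟨⟨_, hx⟩, hxB⟩; exact ⟨hx, hxB⟩
          · rintro ⟨hx, hxB⟩
            exact ⟨⟨fun hxv => hvB (hxv ▸ hxB), hx⟩, hxB⟩
        have := ih (C.erase v) herase
        rw [hinter] at this
        omega
    intro C
    exact key (C \ B).card C rfl
  -- m univ divides m S for all S ⊇ B
  have hdvd : ∀ S : Finset α, B ⊆ S → m Finset.univ ∣ m S := by
    have key : ∀ n (S : Finset α), B ⊆ S → (Sᶜ).card = n →
        m Finset.univ ∣ m S := by
      intro n
      induction n with
      | zero =>
        intro S _ h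
        have h1 : Sᶜ = ∅ := Finset.card_eq_zero.mp h
        have h2 : S = Finset.univ := by
          simpa using congrArg (·ᶜ) h1
        rw [h2]
      | succ n ih =>
        intro S hBS h
        obtain ⟨v, hv⟩ : (Sᶜ).Nonempty := Finset.card_pos.mp (by omega)
        have hvS : v ∉ S := Finset.mem_compl.mp hv
        have hrkins : rk (insert v S) = rk S := by
          rw [hrC, hrC]
          congr 1
          have hvB : v ∉ B := fun hc => hvS (hBS hc)
          ext x
          simp only [Finset.mem_inter, Finset.mem_insert]
          constructor
          · rintro ⟨hx | hx, hxB⟩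
            · exact absurd (hx ▸ hxB) hvB
            · exact ⟨hx, hxB⟩
          · rintro ⟨hx, hxB⟩; exact ⟨Or.inr hx, hxB⟩
        have h1 : m (insert v S) ∣ m S := hax1 S v hrkins
        have h2 : m Finset.univ ∣ m (insert v S) := by
          apply ih (insert v S) (hBS.trans (Finset.subset_insert v S))
          rw [Finset.compl_insert, Finset.card_erase_of_mem hv, h]
          omega
        exact h2.trans h1
    intro S hBS
    exact key (Sᶜ).card S hBS rfl
  constructor
  · intro S hBS
    apply Finset.dvd_sum
    intro T hT
    rw [Finset.mem_Icc] at hT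
    have : m Finset.univ ∣ m T := hdvd T (hBS.trans hT.1)
    exact Dvd.dvd.mul_left (Int.natCast_dvd_natCast.mpr this) _
  · obtain ⟨c, hc⟩ := hdvd B (Finset.Subset.refl B)
    refine ⟨c, ?_, hc, ?_⟩
    · -- double sum equals m B
      have hswap : ∑ S ∈ Finset.Icc B Finset.univ,
          ∑ T ∈ Finset.Icc S Finset.univ, (-1 : ℤ) ^ (T.card - S.card) * m T =
          ∑ T ∈ Finset.Icc B Finset.univ,
          ∑ S ∈ Finset.Icc B T, (-1 : ℤ) ^ (T.card - S.card) * m T := by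
        apply Finset.sum_comm'
        intro S T
        simp only [Finset.mem_Icc]
        constructor
        · rintro ⟨⟨h1, _⟩, h3, h4⟩; exact ⟨⟨h1, h3⟩, h1.trans h3, h4⟩
        · rintro ⟨⟨h1, h3⟩, _, h4⟩; exact ⟨⟨h1, le_top⟩, h3, h4⟩
      rw [hswap]
      have hinner : ∀ T ∈ Finset.Icc B Finset.univ,
          ∑ S ∈ Finset.Icc B T, (-1 : ℤ) ^ (T.card - S.card) * m T =
            (if T = B then 1 else 0) * m T := by
        intro T hT
        rw [Finset.mem_Icc] at hT
        rw [← Finset.sum_mul, sign_sum_Icc hT.1]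
      rw [Finset.sum_congr rfl hinner]
      simp only [ite_mul, one_mul, zero_mul]
      rw [Finset.sum_ite_eq' (Finset.Icc B Finset.univ) B (fun T => (m T : ℤ))]
      have hmem : B ∈ Finset.Icc B Finset.univ :=
        Finset.mem_Icc.mpr ⟨le_rfl, Finset.subset_univ B⟩
      rw [if_pos hmem, hc]
      push_cast
      ring
    · -- c divides m ∅
      have key := hax3 ∅ B Bᶜ (Finset.disjoint_empty_left B)
        (Finset.disjoint_empty_left Bᶜ) disjoint_compl_right
        (by
          intro C _ _
          rw [hrC C, hr0, zero_add])
      simp only [Finset.empty_union, Finset.union_compl] at key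
      rw [hc] at key
      have hpos : 0 < m Finset.univ := hm _
      have h' : m Finset.univ * m ∅ = m Finset.univ * (c * m Bᶜ) := by
        rw [mul_comm (m Finset.univ) (m ∅), key, mul_assoc]
      exact ⟨m Bᶜ, Nat.eq_of_mul_eq_mul_left hpos h'⟩
end

section
/- For the list X = {(1,0,0,0),(0,1,0,0),(0,0,1,0),(1,1,1,5)} in ℤ^4, the arithmetic Tutte polynomial satisfies M_X(1-q, 0) = 5 - 4q + 6q² - 4q³ + q⁴ and M_X(1+q, 1) = 5 + 4q + 6q² + 4q³ + q⁴; in particular these polynomials are not unimodal (hence not log-concave) since the coefficient sequence (5,4,6,4,1) is not unimodal. -/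
open Finset

namespace ArithTutteAux

lemma finrank_toAddSubgroup {G : Type*} [AddCommGroup G] (p : Submodule ℤ G) :
    Module.finrank ℤ p.toAddSubgroup = Module.finrank ℤ p := rfl

lemma grk_eq {G : Type*} [AddCommGroup G] (s : Set G) :
    grk s = Module.finrank ℤ (Submodule.span ℤ s) := by
  rw [grk, ← finrank_toAddSubgroup]
  exact congrArg (fun H : AddSubgroup G => Module.finrank ℤ H)
    (Submodule.span_int_eq_addSubgroupClosure s).symm

def Xv : Fin 4 → (Fin 4 → ℤ) := ![![1,0,0,0],![0,1,0,0],![0,0,1,0],![1,1,1,5]]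

lemma X_li : LinearIndependent ℤ Xv := by
  let g : (Fin 4 → ℤ) →ₗ[ℤ] (Fin 4 → ℚ) :=
    LinearMap.pi fun i => (Int.castAddHom ℚ).toIntLinearMap.comp (LinearMap.proj i)
  have hY : LinearIndependent ℚ (g ∘ Xv) := by
    have : (g ∘ Xv) = fun i => (Matrix.of fun i j => ((Xv i j : ℚ))) i := by
      funext i j; rfl
    rw [this]
    apply Matrix.linearIndependent_rows_iff_isUnit.2
    rw [Matrix.isUnit_iff_isUnit_det, isUnit_iff_ne_zero]
    rw [Matrix.det_of_lowerTriangular _ (by intro i j h; fin_cases i <;> fin_cases j <;> simp_all [Xv] <;> contradiction)]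
    simp [Fin.prod_univ_succ, Xv]
  exact LinearIndependent.of_comp g (hY.restrict_scalars (by intro a b h; simpa using h))

lemma grk_X (A : Finset (Fin 4)) : grk (Xv '' ↑A) = A.card := by
  rw [grk_eq, Set.image_eq_range]
  have h : LinearIndependent ℤ (fun i : ↥(↑A : Set (Fin 4)) => Xv i) :=
    X_li.comp _ Subtype.val_injective
  rw [finrank_span_eq_card h]
  simp

lemma gmult_eq_one {G : Type*} [AddCommGroup G] {H' : Type*} [AddCommGroup H']
    (H : AddSubgroup G) (φ : G →+ H')
    (htf : ∀ (n : ℕ) (y : H'), n ≠ 0 → n • y = 0 → y = 0)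
    (hker : H = φ.ker) : gmult H = 1 := by
  have hsat : satur H = H := by
    apply le_antisymm
    · intro x hx
      have hx' : IsOfFinAddOrder ((QuotientAddGroup.mk' H) x) := hx
      obtain ⟨n, hn, hnx⟩ := isOfFinAddOrder_iff_nsmul_eq_zero.mp hx'
      have : n • x ∈ H := by
        rwa [← map_nsmul, QuotientAddGroup.mk'_apply, QuotientAddGroup.eq_zero_iff] at hnx
      rw [hker, AddMonoidHom.mem_ker] at this ⊢
      exact htf n (φ x) hn.ne' (by rw [← map_nsmul, this])
    · intro x hx
      show IsOfFinAddOrder ((QuotientAddGroup.mk' H) x)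
      have : (QuotientAddGroup.mk' H) x = 0 := (QuotientAddGroup.eq_zero_iff x).mpr hx
      rw [this]; exact IsOfFinAddOrder.zero
  rw [gmult, hsat, AddSubgroup.relIndex_self]

def phi (A : Finset (Fin 4)) : (Fin 4 → ℤ) →+ (Fin 4 → ℤ) :=
  AddMonoidHom.mk' (fun x k => if k ∈ A then 0 else if (3:Fin 4) ∈ A then 5 * x k - x 3 else x k)
    (by intro a b; funext k; simp only [Pi.add_apply]; split_ifs <;> ring)

lemma phi_apply (A : Finset (Fin 4)) (x : Fin 4 → ℤ) (k : Fin 4) :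
    phi A x k = if k ∈ A then 0 else if (3:Fin 4) ∈ A then 5 * x k - x 3 else x k := rfl

lemma gen_ker (A : Finset (Fin 4)) (i : Fin 4) (hi : i ∈ A) : phi A (Xv i) = 0 := by
  funext k
  rw [phi_apply]
  by_cases hk : k ∈ A
  · simp [hk]
  · have hki : k ≠ i := fun h => hk (h ▸ hi)
    simp only [if_neg hk]
    by_cases h3 : (3:Fin 4) ∈ A
    · simp only [if_pos h3]
      fin_cases i <;> fin_cases k <;> first | (exact absurd rfl hki) | decide
    · have hi3 : i ≠ 3 := fun h => h3 (h ▸ hi)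
      simp only [if_neg h3]
      fin_cases i <;> fin_cases k <;>
        first | (exact absurd rfl hki) | (exact absurd rfl hi3) | decide

lemma Xv_apply_ne3 (i : Fin 4) (hi : i ≠ 3) (m : Fin 4) : Xv i m = if m = i then 1 else 0 := by
  fin_cases i <;> fin_cases m <;> first | (exact absurd rfl hi) | decide

lemma Xv3_apply (m : Fin 4) : Xv 3 m = if m = 3 then 5 else 1 := by
  fin_cases m <;> decide

lemma sum_coord (s : Finset (Fin 4)) (hs : (3:Fin 4) ∉ s) (c : Fin 4 → ℤ) (m : Fin 4) :
    (∑ i ∈ s, c i • Xv i) m = if m ∈ s then c m else 0 := by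
  rw [Finset.sum_apply]
  rw [Finset.sum_congr rfl (fun i hi => ?_), Finset.sum_ite_eq s m c]
  have hi3 : i ≠ 3 := fun h => hs (h ▸ hi)
  rw [Pi.smul_apply, Xv_apply_ne3 i hi3, smul_eq_mul]
  split_ifs <;> ring

lemma ker_le (A : Finset (Fin 4)) (hA : A ≠ Finset.univ) (x : Fin 4 → ℤ) (hx : phi A x = 0) :
    x ∈ AddSubgroup.closure (Xv '' ↑A) := by
  have hxk : ∀ k, phi A x k = 0 := fun k => congrFun hx k
  have hmem : ∀ (i : Fin 4), i ∈ A → ∀ c : ℤ, c • Xv i ∈ AddSubgroup.closure (Xv '' ↑A) :=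
    fun i hi c => AddSubgroup.zsmul_mem _
      (AddSubgroup.subset_closure (Set.mem_image_of_mem Xv (Finset.mem_coe.mpr hi))) c
  by_cases h3 : (3:Fin 4) ∈ A
  · obtain ⟨j, hj⟩ : ∃ j, j ∉ A := by
      by_contra h; push_neg at h; exact hA (Finset.eq_univ_iff_forall.mpr h)
    have hkey : ∀ k ∉ A, 5 * x k - x 3 = 0 := by
      intro k hk
      have := hxk k
      rwa [phi_apply, if_neg hk, if_pos h3] at this
    have hxeq : x = x j • Xv 3 + ∑ i ∈ A.erase 3, (x i - x j) • Xv i := by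
      funext m
      rw [Pi.add_apply, Pi.smul_apply, smul_eq_mul, Xv3_apply,
        sum_coord _ (Finset.notMem_erase 3 A) _ m]
      by_cases hm3 : m = 3
      · subst hm3
        rw [if_pos rfl, if_neg (fun h => (Finset.mem_erase.mp h).1 rfl)]
        have := hkey j hj
        omega
      · rw [if_neg hm3]
        by_cases hm : m ∈ A
        · rw [if_pos (show m ∈ A.erase 3 from Finset.mem_erase.mpr ⟨hm3, hm⟩)]; ring
        · rw [if_neg (fun h => hm (Finset.mem_erase.mp h).2)]
          have := hkey m hm
          have := hkey j hj
          omega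
    rw [hxeq]
    exact AddSubgroup.add_mem _ (hmem 3 h3 _)
      (AddSubgroup.sum_mem _ (fun i hi => hmem i (Finset.mem_of_mem_erase hi) _))
  · have hkey : ∀ k ∉ A, x k = 0 := by
      intro k hk
      have := hxk k
      rwa [phi_apply, if_neg hk, if_neg h3] at this
    have hxeq : x = ∑ i ∈ A, x i • Xv i := by
      funext m
      rw [sum_coord _ h3 _ m]
      by_cases hm : m ∈ A
      · rw [if_pos hm]
      · rw [if_neg hm]; exact hkey m hm
    rw [hxeq]
    exact AddSubgroup.sum_mem _ (fun i hi => hmem i hi _)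

lemma closure_eq_ker (A : Finset (Fin 4)) (hA : A ≠ Finset.univ) :
    AddSubgroup.closure (Xv '' ↑A) = (phi A).ker := by
  apply le_antisymm
  · rw [AddSubgroup.closure_le]
    rintro _ ⟨i, hi, rfl⟩
    exact gen_ker A i (Finset.mem_coe.mp hi)
  · exact fun x hx => ker_le A hA x hx

lemma htf_pi : ∀ (n : ℕ) (y : Fin 4 → ℤ), n ≠ 0 → n • y = 0 → y = 0 := by
  intro n y hn hy
  funext k
  have := congrFun hy k
  rw [Pi.smul_apply, Pi.zero_apply, nsmul_eq_mul] at this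
  rcases mul_eq_zero.mp this with h | h
  · exact absurd (by exact_mod_cast h) hn
  · exact h

lemma gmult_proper (A : Finset (Fin 4)) (hA : A ≠ Finset.univ) :
    gmult (AddSubgroup.closure (Xv '' ↑A)) = 1 :=
  gmult_eq_one _ (phi A) htf_pi (closure_eq_ker A hA)

def psi : (Fin 4 → ℤ) →+ ZMod 5 :=
  (Int.castAddHom (ZMod 5)).comp (Pi.evalAddMonoidHom (fun _ : Fin 4 => ℤ) 3)

lemma psi_apply (x : Fin 4 → ℤ) : psi x = (x 3 : ZMod 5) := rfl

lemma closure_univ_eq :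
    AddSubgroup.closure (Xv '' ↑(Finset.univ : Finset (Fin 4))) = psi.ker := by
  apply le_antisymm
  · rw [AddSubgroup.closure_le]
    rintro _ ⟨i, -, rfl⟩
    show psi (Xv i) = 0
    fin_cases i <;> decide
  · intro x hx
    rw [AddMonoidHom.mem_ker, psi_apply, ZMod.intCast_zmod_eq_zero_iff_dvd] at hx
    obtain ⟨t, ht⟩ := hx
    have hxeq : x = (x 0 - t) • Xv 0 + ((x 1 - t) • Xv 1 + ((x 2 - t) • Xv 2 + t • Xv 3)) := by
      funext m
      fin_cases m <;> simp [Xv] <;> omega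
    rw [hxeq]
    have hmem : ∀ (i : Fin 4) (c : ℤ),
        c • Xv i ∈ AddSubgroup.closure (Xv '' ↑(Finset.univ : Finset (Fin 4))) :=
      fun i c => AddSubgroup.zsmul_mem _
        (AddSubgroup.subset_closure (Set.mem_image_of_mem Xv (by simp))) c
    exact AddSubgroup.add_mem _ (hmem _ _) (AddSubgroup.add_mem _ (hmem _ _)
      (AddSubgroup.add_mem _ (hmem _ _) (hmem _ _)))

lemma psi_surj : Function.Surjective psi := by
  intro c
  refine ⟨![0,0,0,(c.val : ℤ)], ?_⟩
  rw [psi_apply]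
  simp [ZMod.natCast_val, ZMod.cast_id]

lemma satur_univ : satur (AddSubgroup.closure (Xv '' ↑(Finset.univ : Finset (Fin 4)))) = ⊤ := by
  rw [eq_top_iff]
  intro x _
  show IsOfFinAddOrder _
  rw [isOfFinAddOrder_iff_nsmul_eq_zero]
  refine ⟨5, by norm_num, ?_⟩
  rw [← map_nsmul, QuotientAddGroup.mk'_apply, QuotientAddGroup.eq_zero_iff]
  rw [closure_univ_eq, AddMonoidHom.mem_ker, map_nsmul, psi_apply]
  show (5 : ℕ) • ((x 3 : ZMod 5)) = 0
  rw [nsmul_eq_mul]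
  have h5 : ((5:ℕ) : ZMod 5) = 0 := by decide
  rw [h5, zero_mul]

lemma gmult_univ : gmult (AddSubgroup.closure (Xv '' ↑(Finset.univ : Finset (Fin 4)))) = 5 := by
  rw [gmult, satur_univ, AddSubgroup.relIndex_top_right, closure_univ_eq,
    AddSubgroup.index_ker, AddMonoidHom.range_eq_top.mpr psi_surj]
  rw [Nat.card_congr AddSubgroup.topEquiv.toEquiv, Nat.card_zmod]

lemma Mval (x y : ℤ) :
    (∑ A ∈ (Finset.univ : Finset (Fin 4)).powerset,
        (gmult (AddSubgroup.closure (Xv '' ↑A)) : ℤ) *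
          (x - 1) ^ (grk (Xv '' ↑(Finset.univ : Finset (Fin 4))) - grk (Xv '' ↑A)) *
          (y - 1) ^ (A.card - grk (Xv '' ↑A))) = x ^ 4 + 4 := by
  have hterm : ∀ A ∈ (Finset.univ : Finset (Fin 4)).powerset,
      (gmult (AddSubgroup.closure (Xv '' ↑A)) : ℤ) *
          (x - 1) ^ (grk (Xv '' ↑(Finset.univ : Finset (Fin 4))) - grk (Xv '' ↑A)) *
          (y - 1) ^ (A.card - grk (Xv '' ↑A))
        = (if A = Finset.univ then (4:ℤ) else 0) + (x - 1) ^ (4 - A.card) := by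
    intro A _
    rw [grk_X, grk_X, Finset.card_univ]
    by_cases hA : A = Finset.univ
    · subst hA
      rw [gmult_univ, if_pos rfl]
      norm_num
    · rw [gmult_proper A hA, if_neg hA]
      norm_num [Fintype.card_fin]
  rw [Finset.sum_congr rfl hterm, Finset.sum_add_distrib]
  have h1 : (∑ A ∈ (Finset.univ : Finset (Fin 4)).powerset,
      (if A = Finset.univ then (4:ℤ) else 0)) = 4 := by
    rw [Finset.sum_ite_eq' _ (Finset.univ : Finset (Fin 4)) (fun _ => (4:ℤ)),
      if_pos (Finset.mem_powerset_self _)]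
  have h2 : (∑ A ∈ (Finset.univ : Finset (Fin 4)).powerset, (x - 1) ^ (4 - A.card)) = x ^ 4 := by
    have key := Finset.prod_add (fun _ : Fin 4 => (1:ℤ)) (fun _ => x - 1) Finset.univ
    simp only [Finset.prod_const, Finset.prod_const_one, one_pow, one_mul, Finset.card_univ,
      Fintype.card_fin] at key
    have : ∀ t ∈ (Finset.univ : Finset (Fin 4)).powerset,
        (x - 1) ^ (Finset.univ \ t).card = (x - 1) ^ (4 - t.card) := by
      intro t _
      congr 1
      rw [Finset.card_sdiff_of_subset (Finset.subset_univ t), Finset.card_univ, Fintype.card_fin]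
    rw [Finset.sum_congr rfl this] at key
    rw [← key]
    norm_num
  rw [h1, h2]; ring

end ArithTutteAux

/-- For `X = {(1,0,0,0),(0,1,0,0),(0,0,1,0),(1,1,1,5)} ⊆ ℤ⁴`, the arithmetic
Tutte polynomial satisfies `M_X(1-q,0) = 5 - 4q + 6q² - 4q³ + q⁴` and
`M_X(1+q,1) = 5 + 4q + 6q² + 4q³ + q⁴`; in particular the sequence of
coefficients `(5,4,6,4,1)` is not unimodal (hence not log-concave). -/
theorem arithTutte_not_unimodal :
    let X : Fin 4 → (Fin 4 → ℤ) :=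
      ![![1, 0, 0, 0], ![0, 1, 0, 0], ![0, 0, 1, 0], ![1, 1, 1, 5]]
    let M : ℤ → ℤ → ℤ := fun x y =>
      ∑ A ∈ (Finset.univ : Finset (Fin 4)).powerset,
        (gmult (AddSubgroup.closure (X '' ↑A)) : ℤ) *
          (x - 1) ^ (grk (X '' ↑(Finset.univ : Finset (Fin 4))) - grk (X '' ↑A)) *
          (y - 1) ^ (A.card - grk (X '' ↑A))
    let a : Fin 5 → ℕ := ![5, 4, 6, 4, 1]
    (∀ q : ℤ, M (1 - q) 0 = 5 - 4 * q + 6 * q ^ 2 - 4 * q ^ 3 + q ^ 4) ∧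
    (∀ q : ℤ, M (1 + q) 1 = 5 + 4 * q + 6 * q ^ 2 + 4 * q ^ 3 + q ^ 4) ∧
    ¬∃ k : Fin 5,
      (∀ i j : Fin 5, i ≤ j → j ≤ k → a i ≤ a j) ∧
      (∀ i j : Fin 5, k ≤ i → i ≤ j → a j ≤ a i) := by
  intro X M a
  refine ⟨fun q => ?_, fun q => ?_, ?_⟩
  · calc M (1 - q) 0 = (1 - q) ^ 4 + 4 := ArithTutteAux.Mval (1 - q) 0
      _ = 5 - 4 * q + 6 * q ^ 2 - 4 * q ^ 3 + q ^ 4 := by ring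
  · calc M (1 + q) 1 = (1 + q) ^ 4 + 4 := ArithTutteAux.Mval (1 + q) 1
      _ = 5 + 4 * q + 6 * q ^ 2 + 4 * q ^ 3 + q ^ 4 := by ring
  · show ¬∃ k : Fin 5,
      (∀ i j : Fin 5, i ≤ j → j ≤ k → (![5, 4, 6, 4, 1] : Fin 5 → ℕ) i ≤ ![5, 4, 6, 4, 1] j) ∧
      (∀ i j : Fin 5, k ≤ i → i ≤ j → (![5, 4, 6, 4, 1] : Fin 5 → ℕ) j ≤ ![5, 4, 6, 4, 1] i)
    decide
end
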